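/- arXiv:math/0610040 — 5 statements merged into one kernel-verified Lean document; each statement's English description precedes it below -/
import Mathlib

section
/- Suppose conditions (H1) and (H2) hold and that I_T(0,0) > 0 for some (equivalently, every) T > 0. Then for any q ∈ 𝓡 and any open set O ⊂ ℝ^d, lim_{δ→0} liminf_{n→∞} (1/n) log inf_{z ∈ E : |z − nq| < δn} G(z, nO) ≥ − inf_{q' ∈ O} I(q,q'). -/
open MeasureTheory Filter Set Metric
open scoped ENNReal Topology Pointwise

noncomputable section

namespace GreenLDP

/-- The state space `ℝ^d` with its Euclidean norm. -/
abbrev Sp (d : ℕ) := EuclideanSpace ℝ (Fin d)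

/-- Path space: trajectories indexed by (real) time. -/
abbrev Path (d : ℕ) := ℝ → Sp d

variable {d : ℕ}

/-- A path is right continuous with left limits at all nonnegative times. -/
def CadlagOn (φ : Path d) : Prop :=
  ∀ t : ℝ, 0 ≤ t → ContinuousWithinAt φ (Ici t) t ∧
    (0 < t → ∃ L : Sp d, Tendsto φ (𝓝[<] t) (𝓝 L))

/-- Basic setup: a time-homogeneous Markov process `Z` on an unbounded subset
`E ⊆ ℝ^d`, described through the family of its path-space laws `P z`
(the law of the process started at `z ∈ E`), whose sample paths are right
continuous with left limits. -/
structure MarkovSetup (d : ℕ) where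
  /-- the (unbounded) state space `E ⊆ ℝ^d` -/
  E : Set (Sp d)
  /-- `P z` is the law on path space of the process started at `z`;
  `P z S = ℙ_z(Z(·) ∈ S)` -/
  P : Sp d → Measure (Path d)
  prob : ∀ z, IsProbabilityMeasure (P z)
  unbounded : ¬ Bornology.IsBounded E
  start : ∀ z ∈ E, P z {ω | ω 0 = z} = 1
  stays : ∀ z ∈ E, ∀ᵐ ω ∂ P z, ∀ t : ℝ, 0 ≤ t → ω t ∈ E
  cadlag : ∀ z ∈ E, ∀ᵐ ω ∂ P z, CadlagOn ω
  /-- (time-homogeneous) Markov property: conditionally on the position at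
  time `s`, the law of the shifted path is that of the process restarted there. -/
  markov : ∀ z ∈ E, ∀ s : ℝ, 0 ≤ s → ∀ F : Path d → ℝ≥0∞, Measurable F →
    ∫⁻ ω, F (fun t => ω (s + t)) ∂ P z = ∫⁻ ω, ∫⁻ ω', F ω' ∂ P (ω s) ∂ P z

/-- Green's function `G(z,B) = ∫₀^∞ ℙ_z(Z(t) ∈ B) dt`. -/
def green (P : Sp d → Measure (Path d)) (z : Sp d) (B : Set (Sp d)) : ℝ≥0∞ :=
  ∫⁻ t in Ioi (0 : ℝ), P z {ω | ω t ∈ B}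

/-- First exit time `τ_R = inf {t ≥ 0 : |Z(t)| ≥ R}` from the open ball of
radius `R` (equal to `∞` if the process never exits). -/
def exitTime (ω : Path d) (R : ℝ) : ℝ≥0∞ :=
  ⨅ t ∈ {t : ℝ | 0 ≤ t ∧ R ≤ ‖ω t‖}, ENNReal.ofReal t

/-- Truncated Green's function `G_R(z,B) = ∫₀^∞ ℙ_z(Z(t) ∈ B, τ_R > t) dt`. -/
def greenTrunc (P : Sp d → Measure (Path d)) (R : ℝ) (z : Sp d) (B : Set (Sp d)) : ℝ≥0∞ :=
  ∫⁻ t in Ioi (0 : ℝ), P z {ω | ω t ∈ B ∧ ENNReal.ofReal t < exitTime ω R}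

/-- The scaled path `Z^ε(t) = ε Z(t/ε)`. -/
def scaledPath (ε : ℝ) (ω : Path d) : Path d := fun t => ε • ω (t / ε)

/-- The set `{z ∈ E : |εz − q| < δ}` of admissible starting points. -/
def nearScaled (E : Set (Sp d)) (ε : ℝ) (q : Sp d) (δ : ℝ) : Set (Sp d) :=
  {z ∈ E | ‖ε • z - q‖ < δ}

/-- The set `{z ∈ E : |z − nq| < δn}` of admissible starting points. -/
def nearE (E : Set (Sp d)) (q : Sp d) (n δ : ℝ) : Set (Sp d) :=
  {z ∈ E | ‖z - n • q‖ < δ * n}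

/-- Large deviation lower bound for the scaled variables `Z^ε(T) = εZ(T/ε)` over
open sets:  `lim_{δ→0} liminf_{ε→0} ε log inf_{z∈E,|εz−q|<δ} ℙ_z(Z^ε(T) ∈ O)
≥ −inf_{q'∈O} I(q,q')`.  (Since the inner quantity is monotone in `δ`, the limit
as `δ → 0⁺` is the supremum over `δ > 0`.) -/
def LDPLower (E : Set (Sp d)) (P : Sp d → Measure (Path d)) (T : ℝ)
    (I : Sp d → Sp d → EReal) : Prop :=
  ∀ (q : Sp d) (O : Set (Sp d)), IsOpen O →
    -(⨅ q' ∈ O, I q q') ≤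
      ⨆ δ : {δ : ℝ // 0 < δ},
        liminf (fun ε : ℝ =>
          (ε : EReal) * ENNReal.log
            (⨅ z ∈ nearScaled E ε q δ.1, P z {ω | scaledPath ε ω T ∈ O}))
          (𝓝[>] (0 : ℝ))

/-- Large deviation upper bound for the scaled variables `Z^ε(T) = εZ(T/ε)` over
compact sets:  `lim_{δ→0} limsup_{ε→0} ε log sup_{z∈E,|εz−q|<δ} ℙ_z(Z^ε(T) ∈ V)
≤ −inf_{q'∈V} I(q,q')`. -/
def LDPUpperCompact (E : Set (Sp d)) (P : Sp d → Measure (Path d)) (T : ℝ)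
    (I : Sp d → Sp d → EReal) : Prop :=
  ∀ (q : Sp d) (V : Set (Sp d)), IsCompact V →
    (⨅ δ : {δ : ℝ // 0 < δ},
      limsup (fun ε : ℝ =>
        (ε : EReal) * ENNReal.log
          (⨆ z ∈ nearScaled E ε q δ.1, P z {ω | scaledPath ε ω T ∈ V}))
        (𝓝[>] (0 : ℝ)))
      ≤ -(⨅ q' ∈ V, I q q')

/-- Large deviation upper bound over closed sets (for the full LDP). -/
def LDPUpperClosed (E : Set (Sp d)) (P : Sp d → Measure (Path d)) (T : ℝ)
    (I : Sp d → Sp d → EReal) : Prop :=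
  ∀ (q : Sp d) (V : Set (Sp d)), IsClosed V →
    (⨅ δ : {δ : ℝ // 0 < δ},
      limsup (fun ε : ℝ =>
        (ε : EReal) * ENNReal.log
          (⨆ z ∈ nearScaled E ε q δ.1, P z {ω | scaledPath ε ω T ∈ V}))
        (𝓝[>] (0 : ℝ)))
      ≤ -(⨅ q' ∈ V, I q q')

/-- The weak large deviation principle in `ℝ^d` for `Z^ε(T)` with a lower
semicontinuous rate function `I_T : ℝ^d × ℝ^d → [0,∞)`. -/
def WeakLDP (E : Set (Sp d)) (P : Sp d → Measure (Path d)) (T : ℝ)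
    (I : Sp d → Sp d → ℝ) : Prop :=
  LowerSemicontinuous (fun p : Sp d × Sp d => I p.1 p.2) ∧
  (∀ q q' : Sp d, 0 ≤ I q q') ∧
  LDPLower E P T (fun q q' => ((I q q' : ℝ) : EReal)) ∧
  LDPUpperCompact E P T (fun q q' => ((I q q' : ℝ) : EReal))

/-- Hypothesis (H1): for every `T > 0` the scaled variables `Z^ε(T)` satisfy the
weak large deviation principle with rate function `I_T`. -/
def H1 (E : Set (Sp d)) (P : Sp d → Measure (Path d))
    (I : ℝ → Sp d → Sp d → ℝ) : Prop :=
  ∀ T : ℝ, 0 < T → WeakLDP E P T (I T)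

/-- The jump generating function
`φ̂(a) = sup_{z∈E} sup_{t∈[0,1]} 𝔼_z exp(a·(Z(t)−z))` of hypothesis (H2). -/
def mgf (E : Set (Sp d)) (P : Sp d → Measure (Path d)) (a : Sp d) : ℝ≥0∞ :=
  ⨆ z ∈ E, ⨆ t ∈ Icc (0:ℝ) 1,
    ∫⁻ ω, ENNReal.ofReal (Real.exp ((inner ℝ a (ω t - z) : ℝ))) ∂ P z

/-- Hypothesis (H2): `φ̂(a) < ∞` for every `a ∈ ℝ^d`. -/
def H2 (E : Set (Sp d)) (P : Sp d → Measure (Path d)) : Prop :=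
  ∀ a : Sp d, mgf E P a < ⊤

/-- Hypothesis (H3), communication condition with constant `θ > 0` : there is a
positive function `σ` on `E` with `σ(z)/|z| → 0` as `|z| → ∞` such that for all
`z, z' ∈ E` the probability, starting from `z`, of ever hitting the open ball
`B(z', σ(z'))` is at least `exp(−θ|z'−z|)`. -/
def H3 (E : Set (Sp d)) (P : Sp d → Measure (Path d)) (θ : ℝ) : Prop :=
  0 < θ ∧ ∃ σ : Sp d → ℝ, (∀ z ∈ E, 0 < σ z) ∧
    (∀ η : ℝ, 0 < η → ∃ M : ℝ, ∀ z ∈ E, M ≤ ‖z‖ → σ z < η * ‖z‖) ∧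
    ∀ z ∈ E, ∀ z' ∈ E,
      ENNReal.ofReal (Real.exp (-θ * ‖z' - z‖)) ≤
        P z {ω | ∃ t : ℝ, 0 ≤ t ∧ ω t ∈ ball z' (σ z')}

/-- The set `𝓡` of all possible limits `lim_{ε→0} ε z_ε` with `z_ε ∈ E`. -/
def RSet (E : Set (Sp d)) : Set (Sp d) :=
  {q | ∃ zf : ℝ → Sp d, (∀ ε : ℝ, zf ε ∈ E) ∧
    Tendsto (fun ε : ℝ => ε • zf ε) (𝓝[>] (0:ℝ)) (𝓝 q)}

/-- The quasipotential `I(q,q') = inf_{T>0} I_T(q,q')`. -/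
def quasipot (I : ℝ → Sp d → Sp d → ℝ) (q q' : Sp d) : ℝ :=
  ⨅ T : {T : ℝ // 0 < T}, I T.1 q q'

-- `Î(q,q') = I(q,q')` for `q ≠ q'` and `Î(q,q) = 0`.
open Classical in
def quasipotHat (I : ℝ → Sp d → Sp d → ℝ) (q q' : Sp d) : ℝ :=
  if q = q' then 0 else quasipot I q q'

/-- The Skorohod distance on `D([0,T],ℝ^d)` :
`d(φ,ψ) = inf_λ max(sup_{t∈[0,T]}|λ(t)−t|, sup_{t∈[0,T]}|φ(λ(t))−ψ(t)|)`,
the infimum being over increasing bijections `λ` of `[0,T]`. -/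
def skorohodDist (T : ℝ) (φ ψ : Path d) : ℝ :=
  sInf {r : ℝ | 0 ≤ r ∧ ∃ lam : ℝ → ℝ, StrictMonoOn lam (Icc 0 T) ∧
    lam '' Icc 0 T = Icc 0 T ∧
    ∀ t ∈ Icc 0 T, |lam t - t| ≤ r ∧ ‖φ (lam t) - ψ t‖ ≤ r}

/-- The Skorohod topology on paths over the time interval `[0,T]`, generated by
the balls of the Skorohod distance. -/
def skorohodTop (d : ℕ) (T : ℝ) : TopologicalSpace (Path d) :=
  TopologicalSpace.generateFrom
    {s | ∃ (φ : Path d) (r : ℝ), 0 < r ∧ s = {ψ | skorohodDist T φ ψ < r}}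

/-- A good rate function on `D([0,T],ℝ^d)` : for every `c ≥ 0` and every compact
`V ⊆ ℝ^d` the set `{φ : φ(0) ∈ V, I_{[0,T]}(φ) ≤ c}` is compact for the
Skorohod topology. -/
def GoodRate (T : ℝ) (J : Path d → ℝ≥0∞) : Prop :=
  ∀ c : ℝ, 0 ≤ c → ∀ V : Set (Sp d), IsCompact V →
    @IsCompact _ (skorohodTop d T) {φ : Path d | φ 0 ∈ V ∧ J φ ≤ ENNReal.ofReal c}

/-- Sample path large deviation lower bound on `D([0,T],ℝ^d)`. -/
def SPLDLower (E : Set (Sp d)) (P : Sp d → Measure (Path d)) (T : ℝ)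
    (J : Path d → ℝ≥0∞) : Prop :=
  ∀ (z : Sp d) (𝓞 : Set (Path d)), @IsOpen _ (skorohodTop d T) 𝓞 →
    -(⨅ φ ∈ {φ ∈ 𝓞 | φ 0 = z}, (J φ : EReal)) ≤
      ⨆ δ : {δ : ℝ // 0 < δ},
        liminf (fun ε : ℝ =>
          (ε : EReal) * ENNReal.log
            (⨅ z' ∈ nearScaled E ε z δ.1, P z' {ω | scaledPath ε ω ∈ 𝓞}))
          (𝓝[>] (0 : ℝ))

/-- Sample path large deviation upper bound on `D([0,T],ℝ^d)`. -/
def SPLDUpper (E : Set (Sp d)) (P : Sp d → Measure (Path d)) (T : ℝ)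
    (J : Path d → ℝ≥0∞) : Prop :=
  ∀ (z : Sp d) (F : Set (Path d)), @IsClosed _ (skorohodTop d T) F →
    (⨅ δ : {δ : ℝ // 0 < δ},
      limsup (fun ε : ℝ =>
        (ε : EReal) * ENNReal.log
          (⨆ z' ∈ nearScaled E ε z δ.1, P z' {ω | scaledPath ε ω ∈ F}))
        (𝓝[>] (0 : ℝ)))
      ≤ -(⨅ φ ∈ {φ ∈ F | φ 0 = z}, (J φ : EReal))

/-- The sample path large deviation principle on `D([0,T],ℝ^d)` with a good rate
function `J = I_{[0,T]}`. -/
def SPLD (E : Set (Sp d)) (P : Sp d → Measure (Path d)) (T : ℝ)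
    (J : Path d → ℝ≥0∞) : Prop :=
  GoodRate T J ∧ SPLDLower E P T J ∧ SPLDUpper E P T J

/-- Hypothesis (H1'): for every `T > 0` the scaled processes satisfy the sample
path large deviation principle with good rate function `I_{[0,T]} = Ipath T`,
and `I_T(q,q')` is the infimum of `I_{[0,T]}(φ)` over paths with `φ(0) = q`,
`φ(T) = q'`. -/
def H1' (E : Set (Sp d)) (P : Sp d → Measure (Path d))
    (Ipath : ℝ → Path d → ℝ≥0∞) (I : ℝ → Sp d → Sp d → ℝ) : Prop :=
  ∀ T : ℝ, 0 < T → SPLD E P T (Ipath T) ∧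
    ∀ q q' : Sp d,
      (ENNReal.ofReal (I T q q') : ℝ≥0∞) =
        ⨅ φ ∈ {φ : Path d | φ 0 = q ∧ φ T = q'}, Ipath T φ

/-- `lim_{δ→0} liminf_{n→∞} (1/n) log inf_{z∈E,|z−nq|<δn} G(z, nB)`
(the limit in `δ` being a supremum, by monotonicity). -/
def greenLiminf (E : Set (Sp d)) (P : Sp d → Measure (Path d))
    (q : Sp d) (B : Set (Sp d)) : EReal :=
  ⨆ δ : {δ : ℝ // 0 < δ},
    liminf (fun n : ℕ =>
      ((((n : ℝ)⁻¹ : ℝ)) : EReal) * ENNReal.log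
        (⨅ z ∈ nearE E q n δ.1, green P z ((n : ℝ) • B))) atTop

/-- `lim_{δ→0} limsup_{n→∞} (1/n) log sup_{z∈E,|z−nq|<δn} G(z, nB)`
(the limit in `δ` being an infimum, by monotonicity). -/
def greenLimsup (E : Set (Sp d)) (P : Sp d → Measure (Path d))
    (q : Sp d) (B : Set (Sp d)) : EReal :=
  ⨅ δ : {δ : ℝ // 0 < δ},
    limsup (fun n : ℕ =>
      ((((n : ℝ)⁻¹ : ℝ)) : EReal) * ENNReal.log
        (⨆ z ∈ nearE E q n δ.1, green P z ((n : ℝ) • B))) atTop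

/-!
Along `ε = 1/n`, the lower bound of (H1) at a fixed time `T` bounds
`ℙ_z(Z(nT) ∈ n B(q', r))` from below, uniformly over `|z - nq| < δn`. A Chernoff bound in
the `2d` coordinate directions turns (H2) into: over a time interval of length `1` the process
moves less than `nr` with probability at least `1/2`, uniformly in the starting point, once `n`
is large. By the Markov property at time `nT` the process therefore spends expected time at least
`½ ℙ_z(Z(nT) ∈ n B(q', r))` in `n B(q', 2r) ⊆ nO` during `[nT, nT + 1]`, which bounds
`G(z, nO)` from below. The factor `½` is invisible on the exponential scale, and taking the
infimum over `T` turns `I_T` into `I`.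
-/

theorem smul_ball_of_pos {V : Type*} [NormedAddCommGroup V] [NormedSpace ℝ V] {c : ℝ} (hc : 0 < c)
    (x : V) (r : ℝ) : c • ball x r = ball (c • x) (c * r) := by
  rw [_root_.smul_ball hc.ne', Real.norm_of_nonneg hc.le]

theorem exists_le_abs_apply_of_le_norm {X : Sp d} {R : ℝ} (hR : 0 < R) (hX : R ≤ ‖X‖) :
    ∃ i, R / (d + 1) ≤ |X i| := by
  by_contra! hsmall
  have hsq : ‖X‖ ^ 2 < R ^ 2 :=
    calc ‖X‖ ^ 2 = ∑ i, ‖X i‖ ^ 2 := EuclideanSpace.norm_sq_eq X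
      _ ≤ ∑ _i : Fin d, (R / (d + 1)) ^ 2 := by
          gcongr with i
          rw [Real.norm_eq_abs]
          exact (hsmall i).le
      _ = d / (d + 1) ^ 2 * R ^ 2 := by simp [div_pow]; ring
      _ < R ^ 2 := by
          have : (d : ℝ) / (d + 1) ^ 2 < 1 := by
            rw [div_lt_one (by positivity)]; nlinarith
          nlinarith [sq_pos_of_pos hR]
  exact absurd hsq (not_lt.2 (pow_le_pow_left₀ hR.le hX 2))

theorem _root_.EReal.le_coe_ciInf {ι : Sort*} [Nonempty ι] {x : EReal} {f : ι → ℝ}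
    (h : ∀ i, x ≤ f i) : x ≤ ((⨅ i, f i : ℝ) : EReal) := by
  induction x using EReal.rec with
  | bot => exact bot_le
  | coe a => exact EReal.coe_le_coe_iff.2 (le_ciInf fun i => EReal.coe_le_coe_iff.1 (h i))
  | top => exact absurd (h (Classical.arbitrary ι)) (EReal.coe_lt_top _).not_ge

theorem liminf_inv_mul_log_le_of_const_mul_le {p G : ℕ → ℝ≥0∞} {c : ℝ≥0∞} (hc₀ : c ≠ 0)
    (hc : c ≠ ⊤) (h : ∀ᶠ n in atTop, c * p n ≤ G n) :
    liminf (fun n : ℕ => (((n : ℝ)⁻¹ : ℝ) : EReal) * ENNReal.log (p n)) atTop ≤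
      liminf (fun n : ℕ => (((n : ℝ)⁻¹ : ℝ) : EReal) * ENNReal.log (G n)) atTop := by
  have hvanish : Tendsto (fun n : ℕ => (((n : ℝ)⁻¹ : ℝ) : EReal) * ENNReal.log c) atTop (𝓝 0) := by
    have hreal : Tendsto (fun n : ℕ => (n : ℝ)⁻¹ * Real.log c.toReal) atTop (𝓝 0) := by
      simpa using (tendsto_inv_atTop_zero.comp tendsto_natCast_atTop_atTop).mul_const
        (Real.log c.toReal)
    rw [ENNReal.log_pos_real hc₀ hc]
    simpa [← EReal.coe_mul] using EReal.tendsto_coe.2 hreal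
  calc liminf (fun n : ℕ => (((n : ℝ)⁻¹ : ℝ) : EReal) * ENNReal.log (p n)) atTop
      = liminf (fun n : ℕ => (((n : ℝ)⁻¹ : ℝ) : EReal) * ENNReal.log c) atTop +
          liminf (fun n : ℕ => (((n : ℝ)⁻¹ : ℝ) : EReal) * ENNReal.log (p n)) atTop := by
        rw [hvanish.liminf_eq, zero_add]
    _ ≤ liminf (fun n : ℕ => (((n : ℝ)⁻¹ : ℝ) : EReal) * ENNReal.log c +
          (((n : ℝ)⁻¹ : ℝ) : EReal) * ENNReal.log (p n)) atTop := EReal.le_liminf_add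
    _ ≤ _ := by
        refine liminf_le_liminf (h.mono fun n hn => ?_)
        rw [← EReal.left_distrib_of_nonneg_of_ne_top (EReal.coe_nonneg.2 (by positivity))
          (EReal.coe_ne_top _), ← ENNReal.log_mul_add]
        exact mul_le_mul_of_nonneg_left (ENNReal.log_monotone hn)
          (EReal.coe_nonneg.2 (by positivity))

section Chernoff

variable {E : Set (Sp d)} {P : Sp d → Measure (Path d)}

theorem meas_le_inner_le_mgf {z : Sp d} (hz : z ∈ E) {u : ℝ} (hu : u ∈ Icc (0 : ℝ) 1)
    (v : Sp d) (ρ : ℝ) :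
    P z {ω | ρ ≤ inner ℝ v (ω u - z)} ≤ mgf E P v * ENNReal.ofReal (Real.exp (-ρ)) := by
  have hf : Measurable fun ω : Path d => ENNReal.ofReal (Real.exp (inner ℝ v (ω u - z))) := by
    fun_prop
  calc P z {ω | ρ ≤ inner ℝ v (ω u - z)}
      ≤ P z {ω | ENNReal.ofReal (Real.exp ρ) ≤ ENNReal.ofReal (Real.exp (inner ℝ v (ω u - z)))} :=
        measure_mono fun ω hω => ENNReal.ofReal_le_ofReal (Real.exp_le_exp.2 hω)
    _ ≤ (∫⁻ ω, ENNReal.ofReal (Real.exp (inner ℝ v (ω u - z))) ∂P z) /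
          ENNReal.ofReal (Real.exp ρ) :=
        meas_ge_le_lintegral_div hf.aemeasurable (by simp [Real.exp_pos]) ENNReal.ofReal_ne_top
    _ ≤ mgf E P v / ENNReal.ofReal (Real.exp ρ) := by
        gcongr
        exact le_iSup₂_of_le z hz (le_iSup₂_of_le u hu le_rfl)
    _ = mgf E P v * ENNReal.ofReal (Real.exp (-ρ)) := by
        rw [div_eq_mul_inv, ← ENNReal.ofReal_inv_of_pos (Real.exp_pos ρ), Real.exp_neg]

theorem meas_le_norm_sub_le {z : Sp d} (hz : z ∈ E) {u : ℝ} (hu : u ∈ Icc (0 : ℝ) 1)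
    {R : ℝ} (hR : 0 < R) :
    P z {ω | R ≤ ‖ω u - z‖} ≤
      (∑ i, (mgf E P (EuclideanSpace.single i 1) + mgf E P (-EuclideanSpace.single i 1))) *
        ENNReal.ofReal (Real.exp (-(R / (d + 1)))) := by
  set ρ := R / (d + 1)
  have hsub : {ω : Path d | R ≤ ‖ω u - z‖} ⊆ ⋃ i : Fin d,
      ({ω | ρ ≤ inner ℝ (EuclideanSpace.single i 1) (ω u - z)} ∪
        {ω | ρ ≤ inner ℝ (-EuclideanSpace.single i 1) (ω u - z)}) := by
    intro ω hω
    obtain ⟨i, hi⟩ := exists_le_abs_apply_of_le_norm hR hω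
    refine mem_iUnion.2 ⟨i, ?_⟩
    rcases le_abs.1 hi with h | h
    · left; simpa [EuclideanSpace.inner_single_left] using h
    · right; simpa [EuclideanSpace.inner_single_left, inner_neg_left] using h
  calc P z {ω | R ≤ ‖ω u - z‖}
      ≤ ∑ i : Fin d, (P z {ω | ρ ≤ inner ℝ (EuclideanSpace.single i 1) (ω u - z)} +
          P z {ω | ρ ≤ inner ℝ (-EuclideanSpace.single i 1) (ω u - z)}) :=
        (measure_mono hsub).trans <| (measure_iUnion_fintype_le _ _).trans <|
          Finset.sum_le_sum fun i _ => measure_union_le _ _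
    _ ≤ _ := by
        rw [Finset.sum_mul]
        gcongr with i
        rw [add_mul]
        exact add_le_add (meas_le_inner_le_mgf hz hu _ _) (meas_le_inner_le_mgf hz hu _ _)

theorem eventually_half_le_meas_norm_sub_lt (hH2 : H2 E P) (hP : ∀ z, IsProbabilityMeasure (P z)) :
    ∀ᶠ R in atTop, ∀ z ∈ E, ∀ u ∈ Icc (0 : ℝ) 1, 2⁻¹ ≤ P z {ω | ‖ω u - z‖ < R} := by
  set S := ∑ i, (mgf E P (EuclideanSpace.single i 1) + mgf E P (-EuclideanSpace.single i 1))
  have hS : S ≠ ⊤ := ENNReal.sum_ne_top.2 fun i _ =>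
    ENNReal.add_ne_top.2 ⟨(hH2 _).ne, (hH2 _).ne⟩
  have htail : Tendsto (fun R : ℝ => S * ENNReal.ofReal (Real.exp (-(R / (d + 1)))))
      atTop (𝓝 0) := by
    have hexp : Tendsto (fun R : ℝ => Real.exp (-(R / (d + 1)))) atTop (𝓝 0) :=
      Real.tendsto_exp_atBot.comp <| tendsto_neg_atTop_atBot.comp <|
        tendsto_id.atTop_div_const (by positivity)
    simpa using ENNReal.Tendsto.const_mul (ENNReal.tendsto_ofReal hexp) (Or.inr hS)
  filter_upwards [htail.eventually_lt_const (ENNReal.inv_pos.2 (ENNReal.ofNat_ne_top (n := 2))),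
    eventually_gt_atTop 0] with R hRsmall hR z hz u hu
  have hmeas : MeasurableSet {ω : Path d | R ≤ ‖ω u - z‖} :=
    measurableSet_le measurable_const (by fun_prop)
  have hcompl : {ω : Path d | ‖ω u - z‖ < R} = {ω | R ≤ ‖ω u - z‖}ᶜ := by
    ext; simp only [mem_ofPred_eq, mem_compl_iff, not_le]
  rw [hcompl, prob_compl_eq_one_sub hmeas, ← ENNReal.one_sub_inv_two]
  exact tsub_le_tsub_left ((meas_le_norm_sub_le hz hu hR).trans hRsmall.le) 1

end Chernoff

theorem green_mono (P : Sp d → Measure (Path d)) (z : Sp d) {B B' : Set (Sp d)} (h : B ⊆ B') :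
    green P z B ≤ green P z B' :=
  lintegral_mono fun _ => measure_mono fun _ hω => h hω

namespace MarkovSetup

variable (M : MarkovSetup d) {z : Sp d} {A B : Set (Sp d)} {a : ℝ≥0∞} {s : ℝ}

theorem mul_le_measure_eval_add (hz : z ∈ M.E) (hs : 0 ≤ s) (hA : MeasurableSet A)
    (hB : MeasurableSet B) {u : ℝ} (ha : ∀ z' ∈ A ∩ M.E, a ≤ M.P z' {ω | ω u ∈ B}) :
    a * M.P z {ω | ω s ∈ A} ≤ M.P z {ω | ω (s + u) ∈ B} := by
  have hAs : MeasurableSet {ω : Path d | ω s ∈ A} := measurable_pi_apply s hA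
  have hBu : MeasurableSet {ω : Path d | ω u ∈ B} := measurable_pi_apply u hB
  have hmarkov := M.markov z hz s hs _ (measurable_one.indicator hBu)
  simp only [lintegral_indicator_one hBu] at hmarkov
  calc a * M.P z {ω | ω s ∈ A}
      = ∫⁻ _ in {ω | ω s ∈ A}, a ∂M.P z := by rw [setLIntegral_const, mul_comm]
    _ ≤ ∫⁻ ω in {ω | ω s ∈ A}, M.P (ω s) {ω' | ω' u ∈ B} ∂M.P z := by
        refine setLIntegral_mono_ae' hAs ?_
        filter_upwards [M.stays z hz] with ω hω hωA using ha _ ⟨hωA, hω s hs⟩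
    _ ≤ ∫⁻ ω, M.P (ω s) {ω' | ω' u ∈ B} ∂M.P z := setLIntegral_le_lintegral _ _
    _ = M.P z {ω | ω (s + u) ∈ B} := by
        rw [← hmarkov,
          ← lintegral_indicator_one (s := {ω : Path d | ω (s + u) ∈ B}) (measurable_pi_apply _ hB)]
        rfl

theorem mul_le_green (hz : z ∈ M.E) (hs : 0 ≤ s) (hA : MeasurableSet A) (hB : MeasurableSet B)
    (ha : ∀ u ∈ Icc (0 : ℝ) 1, ∀ z' ∈ A ∩ M.E, a ≤ M.P z' {ω | ω u ∈ B}) :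
    a * M.P z {ω | ω s ∈ A} ≤ green M.P z B :=
  calc a * M.P z {ω | ω s ∈ A}
      = ∫⁻ _ in Ioo s (s + 1), a * M.P z {ω | ω s ∈ A} := by simp
    _ ≤ ∫⁻ t in Ioo s (s + 1), M.P z {ω | ω t ∈ B} := by
        refine setLIntegral_mono' measurableSet_Ioo fun t ht => ?_
        have hu : t - s ∈ Icc (0 : ℝ) 1 := ⟨by linarith [ht.1], by linarith [ht.2]⟩
        simpa using M.mul_le_measure_eval_add hz hs hA hB (ha _ hu)
    _ ≤ green M.P z B := lintegral_mono_set fun t ht => hs.trans_lt ht.1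

theorem eventually_half_mul_le_green (hH2 : H2 M.E M.P) :
    ∀ᶠ R in atTop, ∀ (x z : Sp d), z ∈ M.E → ∀ s, 0 ≤ s →
      2⁻¹ * M.P z {ω | ω s ∈ ball x R} ≤ green M.P z (ball x (2 * R)) := by
  filter_upwards [eventually_half_le_meas_norm_sub_lt hH2 M.prob] with R hR x z hz s hs
  refine M.mul_le_green hz hs measurableSet_ball measurableSet_ball fun u hu z' hz' => ?_
  refine (hR z' hz'.2 u hu).trans (measure_mono fun ω hω => ?_)
  have hz'x : dist z' x < R := hz'.1
  have hωz' : dist (ω u) z' < R := by simpa [dist_eq_norm] using hω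
  show dist (ω u) x < 2 * R
  linarith [dist_triangle (ω u) z' x]

end MarkovSetup

theorem nearScaled_inv_eq_nearE (E : Set (Sp d)) (q : Sp d) {n : ℝ} (hn : 0 < n) (δ : ℝ) :
    nearScaled E n⁻¹ q δ = nearE E q n δ := by
  ext z
  have hnorm : ‖n⁻¹ • z - q‖ = n⁻¹ * ‖z - n • q‖ := by
    rw [← norm_smul_of_nonneg (inv_nonneg.2 hn.le), smul_sub, inv_smul_smul₀ hn.ne']
  simp only [nearScaled, nearE, mem_ofPred_eq, hnorm, inv_mul_lt_iff₀ hn, mul_comm n]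

theorem scaledPath_inv_mem_ball_iff {n : ℝ} (hn : 0 < n) (ω : Path d) (T : ℝ) (x : Sp d) (r : ℝ) :
    scaledPath n⁻¹ ω T ∈ ball x r ↔ ω (T * n) ∈ ball (n • x) (n * r) := by
  rw [← smul_ball_of_pos hn, mem_smul_set_iff_inv_smul_mem₀ hn.ne', scaledPath, div_inv_eq_mul]

theorem liminf_ldp_le_liminf_green (M : MarkovSetup d) (hH2 : H2 M.E M.P) {T : ℝ} (hT : 0 ≤ T)
    (q x : Sp d) {r : ℝ} (hr : 0 < r) {O : Set (Sp d)} (hO : ball x (2 * r) ⊆ O) (δ : ℝ) :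
    liminf (fun ε : ℝ => (ε : EReal) * ENNReal.log
        (⨅ z ∈ nearScaled M.E ε q δ, M.P z {ω | scaledPath ε ω T ∈ ball x r})) (𝓝[>] 0) ≤
      liminf (fun n : ℕ => (((n : ℝ)⁻¹ : ℝ) : EReal) * ENNReal.log
        (⨅ z ∈ nearE M.E q n δ, green M.P z ((n : ℝ) • O))) atTop := by
  have hseq : Tendsto (fun n : ℕ => (n : ℝ)⁻¹) atTop (𝓝[>] 0) :=
    tendsto_inv_atTop_nhdsGT_zero.comp tendsto_natCast_atTop_atTop
  refine hseq.liminf_le_liminf_comp.trans <|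
    liminf_inv_mul_log_le_of_const_mul_le (c := 2⁻¹) (by simp) (by simp) ?_
  have hradius : Tendsto (fun n : ℕ => (n : ℝ) * r) atTop atTop :=
    tendsto_natCast_atTop_atTop.atTop_mul_const hr
  filter_upwards [hradius.eventually (M.eventually_half_mul_le_green hH2),
    eventually_gt_atTop 0] with n hgreen hn₀
  have hn : (0 : ℝ) < n := Nat.cast_pos.2 hn₀
  have hsub : ball ((n : ℝ) • x) (2 * (n * r)) ⊆ (n : ℝ) • O := by
    rw [mul_left_comm, ← smul_ball_of_pos hn]
    exact smul_set_mono hO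
  simp only [nearScaled_inv_eq_nearE _ _ hn, scaledPath_inv_mem_ball_iff hn]
  refine le_iInf₂ fun z hz => ?_
  calc 2⁻¹ * ⨅ z ∈ nearE M.E q n δ, M.P z {ω | ω (T * n) ∈ ball ((n : ℝ) • x) (n * r)}
      ≤ 2⁻¹ * M.P z {ω | ω (T * n) ∈ ball ((n : ℝ) • x) (n * r)} := by gcongr; exact iInf₂_le z hz
    _ ≤ green M.P z (ball ((n : ℝ) • x) (2 * (n * r))) :=
        hgreen _ z hz.1 _ (mul_nonneg hT hn.le)
    _ ≤ green M.P z ((n : ℝ) • O) := green_mono _ _ hsub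

theorem neg_rate_le_greenLiminf (M : MarkovSetup d) (hH2 : H2 M.E M.P) {T : ℝ} (hT : 0 ≤ T)
    {J : Sp d → Sp d → EReal} (hJ : LDPLower M.E M.P T J) (q : Sp d) {O : Set (Sp d)}
    (hO : IsOpen O) {x : Sp d} (hx : x ∈ O) :
    -J q x ≤ greenLiminf M.E M.P q O := by
  obtain ⟨ρ, hρ, hball⟩ := Metric.isOpen_iff.1 hO x hx
  have hr : 0 < ρ / 2 := half_pos hρ
  have hball' : ball x (2 * (ρ / 2)) ⊆ O := by rwa [mul_div_cancel₀ _ two_ne_zero]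
  calc -J q x ≤ -⨅ y ∈ ball x (ρ / 2), J q y :=
        EReal.neg_le_neg_iff.2 (iInf₂_le x (mem_ball_self hr))
    _ ≤ _ := hJ q _ isOpen_ball
    _ ≤ greenLiminf M.E M.P q O :=
        iSup_mono fun δ => liminf_ldp_le_liminf_green M hH2 hT q x hr hball' δ.1

theorem green_weak_ldp_lower_general
    {d : ℕ} (M : MarkovSetup d) (I : ℝ → Sp d → Sp d → ℝ)
    (hH1 : H1 M.E M.P I) (hH2 : H2 M.E M.P) :
    ∀ q ∈ RSet M.E, ∀ O : Set (Sp d), IsOpen O →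
      -(⨅ q' ∈ O, ((quasipot I q q' : ℝ) : EReal)) ≤ greenLiminf M.E M.P q O := by
  intro q _ O hO
  rw [EReal.neg_le]
  refine le_iInf₂ fun x hx => ?_
  have : Nonempty {T : ℝ // 0 < T} := ⟨⟨1, one_pos⟩⟩
  exact EReal.le_coe_ciInf fun T => EReal.neg_le.1 <|
    neg_rate_le_greenLiminf M hH2 T.2.le (hH1 T.1 T.2).2.2.1 q hO hx

/-- Under (H1), (H2) and `I_T(0,0) > 0`, for every `q ∈ 𝓡` and
every open `O ⊆ ℝ^d`,
`lim_{δ→0} liminf_{n→∞} (1/n) log inf_{z∈E, |z−nq|<δn} G(z,nO) ≥ −inf_{q'∈O} I(q,q')`. -/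
theorem green_weak_ldp_lower
    {d : ℕ} (M : MarkovSetup d) (I : ℝ → Sp d → Sp d → ℝ)
    (hGfin : ∀ z ∈ M.E, ∀ B : Set (Sp d), IsCompact B → green M.P z B < ⊤)
    (hH1 : H1 M.E M.P I) (hH2 : H2 M.E M.P)
    (hI0 : ∃ T : ℝ, 0 < T ∧ 0 < I T 0 0) :
    ∀ q ∈ RSet M.E, ∀ O : Set (Sp d), IsOpen O →
      -(⨅ q' ∈ O, ((quasipot I q q' : ℝ) : EReal)) ≤ greenLiminf M.E M.P q O :=
  green_weak_ldp_lower_general M I hH1 hH2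

end GreenLDP
end
end

section
/- Suppose conditions (H1), (H2) and (H1') hold and that I_T(0,0) > 0. Then for any bounded set V ⊂ ℝ^d, any q ∈ 𝓡 and any A > 0, there exists R > 0 such that lim_{δ→0} limsup_{n→∞} (1/n) log sup_{z ∈ E : |z − nq| < δn} (G(z, nV) − G_{nR}(z, nV)) ≤ −A. -/
open MeasureTheory Filter Set Metric
open scoped ENNReal Topology Pointwise

noncomputable section

namespace GreenLDP

variable {d : ℕ}

/-!
Split `G(z, nV) - G_{nR}(z, nV)` at the time `τn`. Before `τn`, the only contribution comes from
paths leaving the ball of radius `nR` before time `τn`; rescaled by `1/n`, these are paths at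
Skorohod distance at least `R` from the constant path `0` on `[0, τ + 1]`, and since the sample
path rate function is good, `R` can be chosen so large that all such paths started near `q` have
rate at least `A + 1`. After `τn`, the process has to sit in a ball of radius `O(n)` at a time
`t ≫ n`; rescaled by `T/t`, this is the event that `Z^ε(T)` is near `0` when started near `0`,
which costs `exp(-a t)` since `I_T(0,0) > 0`. Both pieces are `O(n e^{-(A+1)n})`.
-/

section LogBounds

lemma le_ofReal_exp_of_mul_log_lt {x : ℝ≥0∞} {ε c : ℝ} (hε : 0 < ε)
    (h : (ε : EReal) * ENNReal.log x < (c : EReal)) :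
    x ≤ ENNReal.ofReal (Real.exp (c / ε)) := by
  rcases ENNReal.trichotomy x with rfl | rfl | hx
  · exact zero_le
  · rw [ENNReal.log_top, EReal.mul_top_of_pos (by exact_mod_cast hε)] at h
    exact absurd h (not_lt.mpr le_top)
  · rw [ENNReal.log_pos_real' hx, ← EReal.coe_mul, EReal.coe_lt_coe_iff] at h
    rw [← ENNReal.ofReal_toReal (ENNReal.toReal_pos_iff.mp hx).2.ne]
    refine ENNReal.ofReal_le_ofReal ((Real.log_lt_iff_lt_exp hx).mp ?_).le
    rwa [lt_div_iff₀' hε]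

lemma mul_log_le_of_le_ofReal_exp {x : ℝ≥0∞} {ε y : ℝ} (hε : 0 < ε)
    (h : x ≤ ENNReal.ofReal (Real.exp y)) :
    (ε : EReal) * ENNReal.log x ≤ ((ε * y : ℝ) : EReal) := by
  have hlog : ENNReal.log x ≤ (y : EReal) := by
    simpa [ENNReal.log_ofReal_of_pos (Real.exp_pos y)] using ENNReal.log_le_log h
  rcases ENNReal.trichotomy x with rfl | rfl | hx
  · rw [ENNReal.log_zero, EReal.mul_bot_of_pos (by exact_mod_cast hε)]
    exact bot_le
  · exact absurd hlog (by simp)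
  · rw [ENNReal.log_pos_real' hx] at hlog ⊢
    rw [← EReal.coe_mul, EReal.coe_le_coe_iff]
    exact mul_le_mul_of_nonneg_left (EReal.coe_le_coe_iff.mp hlog) hε.le

lemma exists_eventually_le_ofReal_exp {f : {δ : ℝ // 0 < δ} → ℝ → ℝ≥0∞} {b : EReal} {c : ℝ}
    (hc : (c : EReal) < b)
    (h : ⨅ δ : {δ : ℝ // 0 < δ},
      limsup (fun ε : ℝ => (ε : EReal) * ENNReal.log (f δ ε)) (𝓝[>] (0 : ℝ)) ≤ -b) :
    ∃ δ : {δ : ℝ // 0 < δ}, ∀ᶠ ε in 𝓝[>] (0 : ℝ), f δ ε ≤ ENNReal.ofReal (Real.exp (-c / ε)) := by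
  have hlt := h.trans_lt (EReal.neg_lt_neg_iff.mpr hc)
  rw [← EReal.coe_neg] at hlt
  obtain ⟨δ, hδ⟩ := iInf_lt_iff.mp hlt
  refine ⟨δ, ?_⟩
  filter_upwards [eventually_lt_of_limsup_lt hδ, self_mem_nhdsWithin] with ε hε hε0
  exact le_ofReal_exp_of_mul_log_lt hε0 hε

lemma limsup_inv_mul_log_le {X : ℕ → ℝ≥0∞} {A : ℝ}
    (h : ∀ᶠ n : ℕ in atTop, X n ≤ ENNReal.ofReal (Real.exp (-A * n))) :
    limsup (fun n : ℕ => (((n : ℝ)⁻¹ : ℝ) : EReal) * ENNReal.log (X n)) atTop ≤ -(A : EReal) := by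
  refine limsup_le_of_le (by isBoundedDefault) ?_
  filter_upwards [h, eventually_gt_atTop 0] with n hn hn0
  have hn0' : (0 : ℝ) < n := Nat.cast_pos.mpr hn0
  have := mul_log_le_of_le_ofReal_exp (inv_pos.mpr hn0') hn
  rwa [show (n : ℝ)⁻¹ * (-A * n) = -A by field_simp, EReal.coe_neg] at this

lemma eventually_mul_add_mul_exp_le (b c A : ℝ) :
    ∀ᶠ n : ℕ in atTop, (b * n + c) * Real.exp (-(A + 1) * n) ≤ Real.exp (-A * n) := by
  have hlim : Tendsto (fun x : ℝ => b * (x ^ 1 * Real.exp (-x)) + c * Real.exp (-x)) atTop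
      (𝓝 0) := by
    simpa using ((Real.tendsto_pow_mul_exp_neg_atTop_nhds_zero 1).const_mul b).add
      (Real.tendsto_exp_neg_atTop_nhds_zero.const_mul c)
  filter_upwards [(hlim.comp tendsto_natCast_atTop_atTop).eventually (gt_mem_nhds one_pos)]
    with n hn
  have hsplit : Real.exp (-(A + 1) * n) = Real.exp (-n) * Real.exp (-A * n) := by
    rw [← Real.exp_add]; ring_nf
  have hn' : (b * n + c) * Real.exp (-n) ≤ 1 := by
    simp only [Function.comp_apply, pow_one] at hn
    linarith
  calc (b * n + c) * Real.exp (-(A + 1) * n)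
      = (b * n + c) * Real.exp (-n) * Real.exp (-A * n) := by rw [hsplit]; ring
    _ ≤ Real.exp (-A * n) := mul_le_of_le_one_left (Real.exp_pos _).le hn'

end LogBounds

section StartingPoints

lemma nearE_subset_nearScaled {E : Set (Sp d)} {q : Sp d} {n δ : ℝ} (hn : 0 < n) :
    nearE E q n δ ⊆ nearScaled E n⁻¹ q δ := by
  rintro z ⟨hzE, hz⟩
  refine ⟨hzE, ?_⟩
  have hrescale : n⁻¹ • z - q = n⁻¹ • (z - n • q) := by
    rw [smul_sub, smul_smul, inv_mul_cancel₀ hn.ne', one_smul]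
  rw [hrescale, norm_smul, Real.norm_of_nonneg (inv_nonneg.mpr hn.le), inv_mul_lt_iff₀ hn]
  linarith

lemma norm_le_of_mem_nearE {E : Set (Sp d)} {q z : Sp d} {n δ : ℝ} (hn : 0 ≤ n)
    (hz : z ∈ nearE E q n δ) : ‖z‖ ≤ (‖q‖ + δ) * n := by
  calc ‖z‖ ≤ ‖n • q‖ + ‖z - n • q‖ := norm_le_norm_add_norm_sub' z (n • q)
    _ ≤ n * ‖q‖ + δ * n := by
        rw [norm_smul, Real.norm_of_nonneg hn]; exact add_le_add le_rfl hz.2.le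
    _ = (‖q‖ + δ) * n := by ring

lemma norm_le_of_mem_smul {V : Set (Sp d)} {v n : ℝ} (hn : 0 ≤ n) (hV : V ⊆ closedBall 0 v)
    {x : Sp d} (hx : x ∈ n • V) : ‖x‖ ≤ v * n := by
  obtain ⟨y, hy, rfl⟩ := hx
  rw [norm_smul, Real.norm_of_nonneg hn, mul_comm]
  exact mul_le_mul_of_nonneg_right (mem_closedBall_zero_iff.mp (hV hy)) hn

end StartingPoints

section Skorohod

lemma isClosed_le_skorohodDist {T R : ℝ} (hR : 0 < R) (φ : Path d) :
    IsClosed[skorohodTop d T] {ψ | R ≤ skorohodDist T φ ψ} := by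
  let _ := skorohodTop d T
  simp_rw [← isOpen_compl_iff, compl_ofPred, not_le]
  exact TopologicalSpace.isOpen_generateFrom_of_mem ⟨φ, R, hR, rfl⟩

lemma GoodRate.exists_skorohodDist_lt {T c : ℝ} {J : Path d → ℝ≥0∞} (hJ : GoodRate T J)
    (hc : 0 ≤ c) (q : Sp d) :
    ∃ R > 0, ∀ φ : Path d, φ 0 = q → J φ ≤ ENNReal.ofReal c →
      skorohodDist T (fun _ => 0) φ < R := by
  let _ := skorohodTop d T
  let U : ℕ → Set (Path d) := fun j => {ψ | skorohodDist T (fun _ => 0) ψ < j + 1}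
  have hU : ∀ j, IsOpen (U j) := fun j =>
    TopologicalSpace.isOpen_generateFrom_of_mem ⟨_, _, by positivity, rfl⟩
  have hcover : {φ : Path d | φ 0 ∈ ({q} : Set (Sp d)) ∧ J φ ≤ ENNReal.ofReal c} ⊆ ⋃ j, U j :=
    fun φ _ => mem_iUnion.mpr
      ((exists_nat_gt (skorohodDist T (fun _ => 0) φ)).imp fun _ hj => hj.trans (lt_add_one _))
  have hmono : Monotone U := fun i j hij ψ hψ => by
    simp only [U, mem_ofPred_eq] at hψ ⊢
    linarith [(Nat.cast_le (α := ℝ)).mpr hij]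
  obtain ⟨j, hj⟩ :=
    (hJ c hc {q} isCompact_singleton).elim_directed_cover U hU hcover hmono.directed_le
  exact ⟨j + 1, by positivity, fun φ hφ hJφ => hj ⟨hφ, hJφ⟩⟩

lemma le_skorohodDist_zero {T R s : ℝ} {ψ : Path d}
    (hψ : Bornology.IsBounded (ψ '' Icc 0 T)) (hs : s ∈ Icc 0 T) (hR : R ≤ ‖ψ s‖) :
    R ≤ skorohodDist T (fun _ => 0) ψ := by
  obtain ⟨C, hC⟩ := isBounded_iff_forall_norm_le.mp hψ
  -- without a bound the set in the `sInf` may be empty, and `skorohodDist` the junk value `0`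
  refine le_csInf ⟨max C 0, le_max_right _ _, id, strictMonoOn_id, image_id _, fun t ht => ?_⟩ ?_
  · simpa using (hC _ (mem_image_of_mem ψ ht)).trans (le_max_left C 0)
  · rintro r ⟨-, lam, -, -, hlam⟩
    exact hR.trans (by simpa using (hlam s hs).2)

lemma CadlagOn.isBounded_image_Icc {φ : Path d} (h : CadlagOn φ) (b : ℝ) :
    Bornology.IsBounded (φ '' Icc 0 b) := by
  have bounded_near : ∀ {l : Filter ℝ} {L : Sp d}, Tendsto φ l (𝓝 L) →
      ∃ u ∈ l, Bornology.IsBounded (φ '' u) := fun hL =>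
    ⟨_, hL (ball_mem_nhds _ one_pos), isBounded_ball.subset (image_preimage_subset _ _)⟩
  refine isCompact_Icc.induction_on (p := fun s => Bornology.IsBounded (φ '' s)) (by simp)
    (fun s t hst ht => ht.subset (image_mono hst))
    (fun s t hs ht => by simpa only [image_union] using hs.union ht) fun x hx => ?_
  obtain ⟨hright, hleft⟩ := h x hx.1
  obtain ⟨u, hu, hub⟩ := bounded_near hright
  rcases hx.1.eq_or_lt with rfl | hx0
  · exact ⟨u, nhdsWithin_mono _ (fun s hs => hs.1) hu, hub⟩
  · obtain ⟨L, hL⟩ := hleft hx0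
    obtain ⟨v, hv, hvb⟩ := bounded_near hL
    refine ⟨v ∪ u, mem_nhdsWithin_of_mem_nhds ?_, by simpa only [image_union] using hvb.union hub⟩
    rw [← nhdsLT_sup_nhdsGE]
    exact union_mem_sup hv hu

lemma exists_le_norm_of_exitTime_lt {ω : Path d} {R u : ℝ}
    (h : exitTime ω R < ENNReal.ofReal u) : ∃ s, 0 ≤ s ∧ s < u ∧ R ≤ ‖ω s‖ := by
  simp only [exitTime, iInf_lt_iff] at h
  obtain ⟨s, ⟨hs0, hsR⟩, hsu⟩ := h
  exact ⟨s, hs0, (ENNReal.ofReal_lt_ofReal_iff'.mp hsu).1, hsR⟩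

lemma CadlagOn.le_skorohodDist_scaledPath_of_exitTime_le {ω : Path d} (hω : CadlagOn ω)
    {n R T t : ℝ} (hn : 0 < n) (ht0 : 0 ≤ t) (ht : t < T * n)
    (hexit : exitTime ω (n * R) ≤ ENNReal.ofReal t) :
    R ≤ skorohodDist T (fun _ => 0) (scaledPath n⁻¹ ω) := by
  obtain ⟨s, hs0, hsT, hsR⟩ := exists_le_norm_of_exitTime_lt
    (hexit.trans_lt ((ENNReal.ofReal_lt_ofReal_iff (ht0.trans_lt ht)).mpr ht))
  have hscaled : scaledPath n⁻¹ ω = (n⁻¹ • ·) ∘ ω ∘ (n * ·) := by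
    ext1 u; simp [scaledPath, div_eq_mul_inv, mul_comm]
  have hbounded : Bornology.IsBounded (scaledPath n⁻¹ ω '' Icc 0 T) := by
    rw [hscaled, image_comp, image_comp]
    refine ((hω.isBounded_image_Icc (n * T)).subset (image_mono ?_)).smul₀ n⁻¹
    rintro _ ⟨u, hu, rfl⟩
    exact ⟨by nlinarith [hu.1], by nlinarith [hu.2]⟩
  refine le_skorohodDist_zero hbounded (s := s / n) ⟨by positivity, ?_⟩ ?_
  · rw [div_le_iff₀ hn]; linarith
  · rwa [hscaled, Function.comp_apply, Function.comp_apply, mul_div_cancel₀ s hn.ne', norm_smul,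
      norm_inv, Real.norm_of_nonneg hn.le, le_inv_mul_iff₀ hn]

end Skorohod

section LargeDeviations

variable {E : Set (Sp d)} {P : Sp d → Measure (Path d)} {T : ℝ}

lemma SPLD.exists_escape_bound {J : Path d → ℝ≥0∞} (hJ : SPLD E P T J) (q : Sp d) {c : ℝ}
    (hc : 0 ≤ c) :
    ∃ R > 0, ∃ δ : {δ : ℝ // 0 < δ}, ∀ᶠ ε in 𝓝[>] (0 : ℝ),
      ⨆ z ∈ nearScaled E ε q δ.1,
        P z {ω | scaledPath ε ω ∈ {ψ | R ≤ skorohodDist T (fun _ => 0) ψ}} ≤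
      ENNReal.ofReal (Real.exp (-c / ε)) := by
  obtain ⟨hgood, -, hupper⟩ := hJ
  obtain ⟨R, hR, hsmall⟩ := hgood.exists_skorohodDist_lt (c := c + 1) (by linarith) q
  have hrate : ((c : ℝ) : EReal) <
      ⨅ φ ∈ {φ ∈ {ψ : Path d | R ≤ skorohodDist T (fun _ => 0) ψ} | φ 0 = q}, (J φ : EReal) := by
    refine (EReal.coe_lt_coe_iff.mpr (lt_add_one c)).trans_le (le_iInf₂ fun φ ⟨hφR, hφq⟩ => ?_)
    have hJφ : ENNReal.ofReal (c + 1) < J φ :=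
      not_le.mp fun hle => (hsmall φ hφq hle).not_ge hφR
    simpa [EReal.coe_ennreal_ofReal, max_eq_left (by linarith : 0 ≤ c + 1)] using
      (EReal.coe_ennreal_lt_coe_ennreal_iff.mpr hJφ).le
  exact ⟨R, hR, exists_eventually_le_ofReal_exp hrate (hupper q _ (isClosed_le_skorohodDist hR _))⟩

lemma WeakLDP.exists_tail_bound {J : Sp d → Sp d → ℝ} (hJ : WeakLDP E P T J) (hT : 0 < T)
    (hJ0 : 0 < J 0 0) :
    ∃ a > 0, ∃ C > 0, ∀ s ≥ 1, ∀ z ∈ E, ‖z‖ ≤ s → ∀ t > C * s,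
      P z {ω | ‖ω t‖ ≤ s} ≤ ENNReal.ofReal (Real.exp (-a * t)) := by
  obtain ⟨hlsc, -, -, hupper⟩ := hJ
  obtain ⟨r, hr, hJr⟩ := Metric.nhds_basis_closedBall.eventually_iff.mp
    ((hlsc.comp (continuous_const.prodMk continuous_id : Continuous fun x : Sp d => ((0 : Sp d), x)))
      (0 : Sp d) (J 0 0 / 2) (half_lt_self hJ0))
  have hrate : ((J 0 0 / 4 : ℝ) : EReal) < ⨅ q' ∈ closedBall (0 : Sp d) r, (J 0 q' : EReal) :=
    (EReal.coe_lt_coe_iff.mpr (by linarith : J 0 0 / 4 < J 0 0 / 2)).trans_le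
      (le_iInf₂ fun q' hq' => EReal.coe_le_coe_iff.mpr (hJr hq').le)
  obtain ⟨δ, hδ⟩ := exists_eventually_le_ofReal_exp hrate (hupper 0 _ (isCompact_closedBall 0 r))
  obtain ⟨ε₀, hε₀, hε₀δ⟩ := mem_nhdsGT_iff_exists_Ioo_subset.mp hδ
  set m := min δ.1 (min r ε₀)
  have hm : 0 < m := lt_min δ.2 (lt_min hr hε₀)
  refine ⟨J 0 0 / 4 / T, by positivity, T / m, by positivity, fun s hs z hzE hz t ht => ?_⟩
  have ht0 : 0 < t := lt_of_le_of_lt (by positivity) ht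
  -- rescale by `ε = T / t`, so that `Z^ε(T) = ε Z(t)`; `ε s < m` meets all three constraints
  have hεpos : 0 < T / t := by positivity
  have hεs : T / t * s < m := by
    rw [gt_iff_lt, div_mul_eq_mul_div, div_lt_iff₀ hm] at ht
    rw [div_mul_eq_mul_div, div_lt_iff₀ ht0]
    linarith
  have hmem : z ∈ nearScaled E (T / t) 0 δ.1 := by
    refine ⟨hzE, ?_⟩
    rw [sub_zero, norm_smul, Real.norm_of_nonneg hεpos.le]
    calc T / t * ‖z‖ ≤ T / t * s := mul_le_mul_of_nonneg_left hz hεpos.le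
      _ < δ.1 := hεs.trans_le (min_le_left _ _)
  have hevent : {ω : Path d | ‖ω t‖ ≤ s} ⊆
      {ω | scaledPath (T / t) ω T ∈ closedBall (0 : Sp d) r} := fun ω hω => by
    rw [mem_ofPred_eq, scaledPath, div_div_cancel₀ hT.ne', mem_closedBall_zero_iff, norm_smul,
      Real.norm_of_nonneg hεpos.le]
    calc T / t * ‖ω t‖ ≤ T / t * s := mul_le_mul_of_nonneg_left hω hεpos.le
      _ ≤ r := hεs.le.trans ((min_le_right _ _).trans (min_le_left _ _))
  calc P z {ω | ‖ω t‖ ≤ s}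
      ≤ ⨆ z' ∈ nearScaled E (T / t) 0 δ.1,
          P z' {ω | scaledPath (T / t) ω T ∈ closedBall (0 : Sp d) r} :=
        (measure_mono hevent).trans (le_biSup (fun z' => P z' _) hmem)
    _ ≤ ENNReal.ofReal (Real.exp (-(J 0 0 / 4) / (T / t))) := by
        refine hε₀δ ⟨hεpos, ?_⟩
        calc T / t ≤ T / t * s := le_mul_of_one_le_right hεpos.le hs
          _ < ε₀ := hεs.trans_le ((min_le_right _ _).trans (min_le_right _ _))
    _ = ENNReal.ofReal (Real.exp (-(J 0 0 / 4 / T) * t)) := by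
        congr 2; field_simp

end LargeDeviations

section Green

lemma green_le_greenTrunc_add {P : Sp d → Measure (Path d)} {z : Sp d} {B : Set (Sp d)}
    {R τ a : ℝ} {β : ℝ≥0∞} (hτ : 0 ≤ τ) (ha : 0 < a)
    (hhead : ∀ t ∈ Ioc 0 τ,
      P z {ω | ω t ∈ B} ≤ P z {ω | ω t ∈ B ∧ ENNReal.ofReal t < exitTime ω R} + β)
    (htail : ∀ t > τ, P z {ω | ω t ∈ B} ≤ ENNReal.ofReal (Real.exp (-a * t))) :
    green P z B ≤
      greenTrunc P R z B + (β * ENNReal.ofReal τ + ENNReal.ofReal (Real.exp (-a * τ) / a)) := by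
  have hhead_int :
      (∫⁻ t in Ioc 0 τ, P z {ω | ω t ∈ B}) ≤ greenTrunc P R z B + β * ENNReal.ofReal τ :=
    calc (∫⁻ t in Ioc 0 τ, P z {ω | ω t ∈ B})
        ≤ ∫⁻ t in Ioc 0 τ, (P z {ω | ω t ∈ B ∧ ENNReal.ofReal t < exitTime ω R} + β) :=
          setLIntegral_mono' measurableSet_Ioc hhead
      _ = (∫⁻ t in Ioc 0 τ, P z {ω | ω t ∈ B ∧ ENNReal.ofReal t < exitTime ω R}) +
            β * ENNReal.ofReal τ := by
          rw [lintegral_add_right _ measurable_const, setLIntegral_const, Real.volume_Ioc, sub_zero]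
      _ ≤ _ := add_le_add (lintegral_mono_set Ioc_subset_Ioi_self) le_rfl
  have htail_int :
      (∫⁻ t in Ioi τ, P z {ω | ω t ∈ B}) ≤ ENNReal.ofReal (Real.exp (-a * τ) / a) :=
    calc (∫⁻ t in Ioi τ, P z {ω | ω t ∈ B})
        ≤ ∫⁻ t in Ioi τ, ENNReal.ofReal (Real.exp (-a * t)) :=
          setLIntegral_mono' measurableSet_Ioi htail
      _ = ENNReal.ofReal (∫ t in Ioi τ, Real.exp (-a * t)) :=
          (ofReal_integral_eq_lintegral_ofReal (exp_neg_integrableOn_Ioi τ ha)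
            (Eventually.of_forall fun t => (Real.exp_pos _).le)).symm
      _ = _ := by rw [integral_exp_mul_Ioi (neg_neg_of_pos ha), neg_div_neg_eq]
  calc green P z B
      = (∫⁻ t in Ioc 0 τ, P z {ω | ω t ∈ B}) + ∫⁻ t in Ioi τ, P z {ω | ω t ∈ B} := by
        rw [green, ← Ioc_union_Ioi_eq_Ioi hτ,
          lintegral_union measurableSet_Ioi Ioc_disjoint_Ioi_same]
    _ ≤ _ := by rw [← add_assoc]; exact add_le_add hhead_int htail_int

lemma MarkovSetup.measure_le_add_escape (M : MarkovSetup d) {z : Sp d} (hz : z ∈ M.E)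
    (B : Set (Sp d)) {n R T t : ℝ} (hn : 0 < n) (ht0 : 0 ≤ t) (ht : t < T * n) :
    M.P z {ω | ω t ∈ B} ≤
      M.P z {ω | ω t ∈ B ∧ ENNReal.ofReal t < exitTime ω (n * R)} +
        M.P z {ω | scaledPath n⁻¹ ω ∈ {ψ | R ≤ skorohodDist T (fun _ => 0) ψ}} := by
  refine (measure_mono_ae ((M.cadlag z hz).mono fun ω hω hB => ?_)).trans (measure_union_le _ _)
  by_cases hexit : ENNReal.ofReal t < exitTime ω (n * R)
  · exact Or.inl ⟨hB, hexit⟩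
  · exact Or.inr (hω.le_skorohodDist_scaledPath_of_exitTime_le hn ht0 ht (not_lt.mp hexit))

lemma MarkovSetup.green_sub_greenTrunc_le (M : MarkovSetup d) {z : Sp d} (hz : z ∈ M.E)
    (B : Set (Sp d)) {n R T τ a c : ℝ} (hn : 0 < n) (hτ : 0 ≤ τ) (hτT : τ < T) (ha : 0 < a)
    (hc : c ≤ a * τ)
    (hescape : M.P z {ω | scaledPath n⁻¹ ω ∈ {ψ | R ≤ skorohodDist T (fun _ => 0) ψ}} ≤
      ENNReal.ofReal (Real.exp (-c * n)))
    (htail : ∀ t > τ * n, M.P z {ω | ω t ∈ B} ≤ ENNReal.ofReal (Real.exp (-a * t))) :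
    green M.P z B - greenTrunc M.P (n * R) z B ≤
      ENNReal.ofReal ((τ * n + a⁻¹) * Real.exp (-c * n)) := by
  have hhead : ∀ t ∈ Ioc 0 (τ * n), M.P z {ω | ω t ∈ B} ≤
      M.P z {ω | ω t ∈ B ∧ ENNReal.ofReal t < exitTime ω (n * R)} +
        ENNReal.ofReal (Real.exp (-c * n)) := fun t ht =>
    (M.measure_le_add_escape hz B hn ht.1.le (ht.2.trans_lt (mul_lt_mul_of_pos_right hτT hn))).trans
      (add_le_add le_rfl hescape)
  refine tsub_le_iff_left.mpr ((green_le_greenTrunc_add (by positivity) ha hhead htail).trans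
    (add_le_add le_rfl ?_))
  have htail_le : Real.exp (-a * (τ * n)) / a ≤ a⁻¹ * Real.exp (-c * n) := by
    rw [div_eq_inv_mul]
    exact mul_le_mul_of_nonneg_left (Real.exp_le_exp.mpr (by nlinarith)) (inv_nonneg.mpr ha.le)
  rw [← ENNReal.ofReal_mul (Real.exp_pos _).le, ← ENNReal.ofReal_add (by positivity) (by positivity)]
  exact ENNReal.ofReal_le_ofReal (by linarith)

end Green

theorem green_trunc_negligible_general
    {d : ℕ} (M : MarkovSetup d) (I : ℝ → Sp d → Sp d → ℝ)
    (Ipath : ℝ → Path d → ℝ≥0∞)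
    (hH1 : H1 M.E M.P I)
    (hH1' : H1' M.E M.P Ipath I)
    (hI0 : ∃ T : ℝ, 0 < T ∧ 0 < I T 0 0) :
    ∀ V : Set (Sp d), Bornology.IsBounded V → ∀ q ∈ RSet M.E, ∀ A : ℝ, 0 < A →
      ∃ R : ℝ, 0 < R ∧
        (⨅ δ : {δ : ℝ // 0 < δ},
          limsup (fun n : ℕ =>
            ((((n : ℝ)⁻¹ : ℝ)) : EReal) * ENNReal.log
              (⨆ z ∈ nearE M.E q n δ.1,
                (green M.P z ((n : ℝ) • V) -
                  greenTrunc M.P ((n : ℝ) * R) z ((n : ℝ) • V)))) atTop)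
          ≤ -(A : EReal) := by
  intro V hV q _ A hA
  obtain ⟨T, hT, hI⟩ := hI0
  obtain ⟨a, ha, C, hC, htail⟩ := (hH1 T hT).exists_tail_bound hT hI
  obtain ⟨v, hVv⟩ := (isBounded_iff_subset_closedBall (0 : Sp d)).mp hV
  -- both the starting points near `nq` and the points of `n • V` have norm at most `K n`
  set K := max (‖q‖ + 1) (max v 1)
  set τ := max (C * K) ((A + 1) / a)
  have hτ : 0 ≤ τ := (div_nonneg (by linarith) ha.le).trans (le_max_right _ _)
  obtain ⟨R, hR, δ, hescape⟩ :=
    (hH1' (τ + 1) (by linarith)).1.exists_escape_bound q (c := A + 1) (by linarith)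
  refine ⟨R, hR, (iInf_le _ ⟨min δ.1 1, lt_min δ.2 one_pos⟩).trans (limsup_inv_mul_log_le ?_)⟩
  filter_upwards [eventually_ge_atTop 1, eventually_mul_add_mul_exp_le τ a⁻¹ A,
    (tendsto_inv_atTop_nhdsGT_zero.comp tendsto_natCast_atTop_atTop).eventually hescape]
    with n hn hnum hescape_n
  have hn0 : (0 : ℝ) < n := by exact_mod_cast hn
  refine iSup₂_le fun z hz => (M.green_sub_greenTrunc_le hz.1 _ hn0 hτ (lt_add_one τ) ha
    ((div_le_iff₀' ha).mp (le_max_right _ _)) ?_ ?_).trans (ENNReal.ofReal_le_ofReal hnum)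
  · have hz' : z ∈ nearScaled M.E (n : ℝ)⁻¹ q δ.1 := nearE_subset_nearScaled hn0
      ⟨hz.1, hz.2.trans_le (mul_le_mul_of_nonneg_right (min_le_left _ _) hn0.le)⟩
    simpa [div_inv_eq_mul] using (le_biSup (fun z => M.P z _) hz').trans hescape_n
  · intro t ht
    refine (measure_mono fun ω hω => ?_).trans (htail (K * n) ?_ z hz.1 ?_ t ?_)
    · exact (norm_le_of_mem_smul hn0.le hVv hω).trans
        (mul_le_mul_of_nonneg_right (le_max_of_le_right (le_max_left _ _)) hn0.le)
    · exact one_le_mul_of_one_le_of_one_le (le_max_of_le_right (le_max_right _ _))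
        (by exact_mod_cast hn)
    · refine (norm_le_of_mem_nearE hn0.le hz).trans (mul_le_mul_of_nonneg_right ?_ hn0.le)
      exact le_max_of_le_left (by linarith [min_le_right δ.1 1])
    · rw [← mul_assoc]
      exact (mul_le_mul_of_nonneg_right (le_max_left _ _) hn0.le).trans_lt ht

/-- Under (H1), (H2), (H1') and `I_T(0,0) > 0`, for every bounded
`V ⊆ ℝ^d`, every `q ∈ 𝓡` and every `A > 0` there is `R > 0` such that
`lim_{δ→0} limsup_{n→∞} (1/n) log sup_{z∈E, |z−nq|<δn} (G(z,nV) − G_{nR}(z,nV)) ≤ −A`. -/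
theorem green_trunc_negligible
    {d : ℕ} (M : MarkovSetup d) (I : ℝ → Sp d → Sp d → ℝ)
    (Ipath : ℝ → Path d → ℝ≥0∞)
    (hGfin : ∀ z ∈ M.E, ∀ B : Set (Sp d), IsCompact B → green M.P z B < ⊤)
    (hH1 : H1 M.E M.P I) (hH2 : H2 M.E M.P)
    (hH1' : H1' M.E M.P Ipath I)
    (hI0 : ∃ T : ℝ, 0 < T ∧ 0 < I T 0 0) :
    ∀ V : Set (Sp d), Bornology.IsBounded V → ∀ q ∈ RSet M.E, ∀ A : ℝ, 0 < A →
      ∃ R : ℝ, 0 < R ∧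
        (⨅ δ : {δ : ℝ // 0 < δ},
          limsup (fun n : ℕ =>
            ((((n : ℝ)⁻¹ : ℝ)) : EReal) * ENNReal.log
              (⨆ z ∈ nearE M.E q n δ.1,
                (green M.P z ((n : ℝ) • V) -
                  greenTrunc M.P ((n : ℝ) * R) z ((n : ℝ) • V)))) atTop)
          ≤ -(A : EReal) :=
  green_trunc_negligible_general M I Ipath hH1 hH1' hI0
end GreenLDP
end
end

section
/- If the family Z^ε(T) = ε Z(T/ε) satisfies the weak large deviation principle in ℝ^d with a rate function I_T for some T > 0, then it satisfies the weak large deviation principle for every T > 0, and the rate functions obey the scaling relation I_{θT}(θq, θq') = θ · I_T(q,q') for all θ > 0, T > 0 and q,q' ∈ ℝ^d. -/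
open MeasureTheory Filter Set Metric
open scoped ENNReal Topology Pointwise

noncomputable section

/-! Pathwise `Z^ε(cT) = c · Z^{ε/c}(T)`, and the window `|εz − q| < δ` is the window
`|(ε/c) z − q/c| < δ/c`. Hence every quantity `ε log ℙ(…)` entering the bounds at time `cT` for
`(q, δ, ε, S)` is `c` times the corresponding quantity at time `T` for `(q/c, δ/c, ε/c, S/c)`.
Since `ε ↦ ε/c` preserves `𝓝[>] 0` and `δ ↦ δ/c` permutes the positive reals, the weak LDP at
time `T` with rate `I` becomes the weak LDP at time `cT` with rate `c I(·/c, ·/c)`; taking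
`c = T/T₀` defines `I_T`, and the scaling relation is the composition rule of these rescalings. -/

namespace EReal

def mulPosOrderIso (c : ℝ) (hc : 0 < c) : EReal ≃o EReal :=
  Equiv.toOrderIso
    { toFun := fun x => (c : EReal) * x
      invFun := fun x => ((c⁻¹ : ℝ) : EReal) * x
      left_inv := fun x => by
        dsimp only
        rw [← mul_assoc, ← EReal.coe_mul, inv_mul_cancel₀ hc.ne', EReal.coe_one, one_mul]
      right_inv := fun x => by
        dsimp only
        rw [← mul_assoc, ← EReal.coe_mul, mul_inv_cancel₀ hc.ne', EReal.coe_one, one_mul] }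
    (fun _ _ h => mul_le_mul_of_nonneg_left h (EReal.coe_nonneg.2 hc.le))
    (fun _ _ h => mul_le_mul_of_nonneg_left h (EReal.coe_nonneg.2 (inv_pos.2 hc).le))

@[simp] lemma mulPosOrderIso_apply (c : ℝ) (hc : 0 < c) (x : EReal) :
    mulPosOrderIso c hc x = (c : EReal) * x := rfl

lemma coe_mul_eq_mul_coe_inv_mul {c : ℝ} (hc : c ≠ 0) (ε : ℝ) (x : EReal) :
    (ε : EReal) * x = c * (((c⁻¹ * ε : ℝ) : EReal) * x) := by
  rw [← mul_assoc, ← EReal.coe_mul, mul_inv_cancel_left₀ hc]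

end EReal

lemma Filter.map_mulLeft_nhdsGT_zero {c : ℝ} (hc : 0 < c) :
    map (c * ·) (𝓝[>] (0 : ℝ)) = 𝓝[>] 0 := by
  conv_lhs => rw [← comap_mulLeft_nhdsGT_zero hc]
  exact map_comap_of_surjective (mul_left_surjective₀ hc.ne') _

lemma Filter.liminf_comp_mulLeft_nhdsGT_zero {α : Type*} [ConditionallyCompleteLattice α]
    (u : ℝ → α) {c : ℝ} (hc : 0 < c) :
    liminf (fun ε => u (c * ε)) (𝓝[>] 0) = liminf u (𝓝[>] 0) :=
  congrArg (liminf u) (map_mulLeft_nhdsGT_zero hc)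

lemma Filter.limsup_comp_mulLeft_nhdsGT_zero {α : Type*} [ConditionallyCompleteLattice α]
    (u : ℝ → α) {c : ℝ} (hc : 0 < c) :
    limsup (fun ε => u (c * ε)) (𝓝[>] 0) = limsup u (𝓝[>] 0) :=
  congrArg (limsup u) (map_mulLeft_nhdsGT_zero hc)

lemma surjective_inv_mul_pos {c : ℝ} (hc : 0 < c) :
    Function.Surjective fun δ : {δ : ℝ // 0 < δ} =>
      (⟨c⁻¹ * δ, mul_pos (inv_pos.2 hc) δ.2⟩ : {δ : ℝ // 0 < δ}) :=
  fun δ => ⟨⟨c * δ, mul_pos hc δ.2⟩, Subtype.ext (inv_mul_cancel_left₀ hc.ne' δ)⟩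

lemma EReal.iSup_liminf_rescale {c : ℝ} (hc : 0 < c) (v : ℝ → ℝ → EReal) :
    ⨆ δ : {δ : ℝ // 0 < δ}, liminf (fun ε => (c : EReal) * v (c⁻¹ * δ) (c⁻¹ * ε)) (𝓝[>] 0)
      = c * ⨆ δ : {δ : ℝ // 0 < δ}, liminf (v δ) (𝓝[>] 0) := by
  let e := EReal.mulPosOrderIso c hc
  calc _ = ⨆ δ : {δ : ℝ // 0 < δ}, e (liminf (v (c⁻¹ * δ)) (𝓝[>] 0)) := by
        refine iSup_congr fun δ => ?_
        rw [e.liminf_apply]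
        exact liminf_comp_mulLeft_nhdsGT_zero (fun ε => e (v (c⁻¹ * δ) ε)) (inv_pos.2 hc)
    _ = ⨆ δ : {δ : ℝ // 0 < δ}, e (liminf (v δ) (𝓝[>] 0)) :=
        (surjective_inv_mul_pos hc).iSup_comp fun δ => e (liminf (v δ) (𝓝[>] 0))
    _ = _ := (e.map_iSup _).symm

lemma EReal.iInf_limsup_rescale {c : ℝ} (hc : 0 < c) (v : ℝ → ℝ → EReal) :
    ⨅ δ : {δ : ℝ // 0 < δ}, limsup (fun ε => (c : EReal) * v (c⁻¹ * δ) (c⁻¹ * ε)) (𝓝[>] 0)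
      = c * ⨅ δ : {δ : ℝ // 0 < δ}, limsup (v δ) (𝓝[>] 0) := by
  let e := EReal.mulPosOrderIso c hc
  calc _ = ⨅ δ : {δ : ℝ // 0 < δ}, e (limsup (v (c⁻¹ * δ)) (𝓝[>] 0)) := by
        refine iInf_congr fun δ => ?_
        rw [e.limsup_apply]
        exact limsup_comp_mulLeft_nhdsGT_zero (fun ε => e (v (c⁻¹ * δ) ε)) (inv_pos.2 hc)
    _ = ⨅ δ : {δ : ℝ // 0 < δ}, e (limsup (v δ) (𝓝[>] 0)) :=
        (surjective_inv_mul_pos hc).iInf_comp fun δ => e (limsup (v δ) (𝓝[>] 0))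
    _ = _ := (e.map_iInf _).symm

lemma EReal.biInf_coe_mul_inv_smul {c : ℝ} (hc : 0 < c) {V : Type*} [SMul ℝ V] (s : Set V)
    (f : V → ℝ) :
    ⨅ x ∈ s, (((c * f (c⁻¹ • x)) : ℝ) : EReal) = c * ⨅ x ∈ c⁻¹ • s, (f x : EReal) := by
  rw [← image_smul, iInf_image, ← EReal.mulPosOrderIso_apply c hc]
  simp only [OrderIso.map_iInf, EReal.mulPosOrderIso_apply, EReal.coe_mul]

namespace GreenLDP

variable {d : ℕ}

def logInfProb (E : Set (Sp d)) (P : Sp d → Measure (Path d)) (T : ℝ) (q : Sp d) (δ ε : ℝ)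
    (S : Set (Sp d)) : EReal :=
  (ε : EReal) * ENNReal.log (⨅ z ∈ nearScaled E ε q δ, P z {ω | scaledPath ε ω T ∈ S})

def logSupProb (E : Set (Sp d)) (P : Sp d → Measure (Path d)) (T : ℝ) (q : Sp d) (δ ε : ℝ)
    (S : Set (Sp d)) : EReal :=
  (ε : EReal) * ENNReal.log (⨆ z ∈ nearScaled E ε q δ, P z {ω | scaledPath ε ω T ∈ S})

def rescaledRate (I : Sp d → Sp d → ℝ) (c : ℝ) (q q' : Sp d) : ℝ :=
  c * I (c⁻¹ • q) (c⁻¹ • q')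

lemma rescaledRate_one (I : Sp d → Sp d → ℝ) : rescaledRate I 1 = I := by
  ext q q'
  simp [rescaledRate]

lemma rescaledRate_mul (I : Sp d → Sp d → ℝ) {a : ℝ} (ha : a ≠ 0) (b : ℝ) (q q' : Sp d) :
    rescaledRate I (a * b) (a • q) (a • q') = a * rescaledRate I b q q' := by
  simp only [rescaledRate, mul_inv_rev, smul_smul, mul_assoc, inv_mul_cancel₀ ha, mul_one]

lemma scaledPath_mul_time {c : ℝ} (hc : c ≠ 0) (ε T : ℝ) (ω : Path d) :
    scaledPath ε ω (c * T) = c • scaledPath (c⁻¹ * ε) ω T := by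
  simp only [scaledPath, smul_smul, mul_inv_cancel_left₀ hc]
  congr 2
  field_simp

lemma nearScaled_eq_inv_mul (E : Set (Sp d)) {c : ℝ} (hc : 0 < c) (ε : ℝ) (q : Sp d) (δ : ℝ) :
    nearScaled E ε q δ = nearScaled E (c⁻¹ * ε) (c⁻¹ • q) (c⁻¹ * δ) := by
  ext z
  simp only [nearScaled, mem_ofPred_eq, ← smul_smul, ← smul_sub, norm_smul,
    Real.norm_eq_abs, abs_of_pos (inv_pos.2 hc), mul_lt_mul_iff_right₀ (inv_pos.2 hc)]

lemma setOf_scaledPath_mul_time_mem {c : ℝ} (hc : c ≠ 0) (ε T : ℝ) (S : Set (Sp d)) :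
    {ω : Path d | scaledPath ε ω (c * T) ∈ S} = {ω | scaledPath (c⁻¹ * ε) ω T ∈ c⁻¹ • S} := by
  ext ω
  rw [mem_ofPred_eq, mem_ofPred_eq, scaledPath_mul_time hc, mem_inv_smul_set_iff₀ hc]

lemma logInfProb_mul_time (E : Set (Sp d)) (P : Sp d → Measure (Path d)) {c : ℝ} (hc : 0 < c)
    (T : ℝ) (q : Sp d) (δ ε : ℝ) (S : Set (Sp d)) :
    logInfProb E P (c * T) q δ ε S
      = c * logInfProb E P T (c⁻¹ • q) (c⁻¹ * δ) (c⁻¹ * ε) (c⁻¹ • S) := by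
  rw [logInfProb, nearScaled_eq_inv_mul E hc, setOf_scaledPath_mul_time_mem hc.ne',
    EReal.coe_mul_eq_mul_coe_inv_mul hc.ne']
  rfl

lemma logSupProb_mul_time (E : Set (Sp d)) (P : Sp d → Measure (Path d)) {c : ℝ} (hc : 0 < c)
    (T : ℝ) (q : Sp d) (δ ε : ℝ) (S : Set (Sp d)) :
    logSupProb E P (c * T) q δ ε S
      = c * logSupProb E P T (c⁻¹ • q) (c⁻¹ * δ) (c⁻¹ * ε) (c⁻¹ • S) := by
  rw [logSupProb, nearScaled_eq_inv_mul E hc, setOf_scaledPath_mul_time_mem hc.ne',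
    EReal.coe_mul_eq_mul_coe_inv_mul hc.ne']
  rfl

lemma LDPLower.rescale {E : Set (Sp d)} {P : Sp d → Measure (Path d)} {T : ℝ}
    {I : Sp d → Sp d → ℝ} (h : LDPLower E P T fun q q' => (I q q' : EReal)) {c : ℝ} (hc : 0 < c) :
    LDPLower E P (c * T) fun q q' => (rescaledRate I c q q' : EReal) := by
  intro q O hO
  have key := h (c⁻¹ • q) (c⁻¹ • O) (hO.smul₀ (inv_ne_zero hc.ne'))
  change -(⨅ q' ∈ O, ((c * I (c⁻¹ • q) (c⁻¹ • q') : ℝ) : EReal)) ≤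
    ⨆ δ : {δ : ℝ // 0 < δ}, liminf (fun ε => logInfProb E P (c * T) q δ ε O) (𝓝[>] 0)
  simp only [logInfProb_mul_time E P hc,
    EReal.iSup_liminf_rescale hc fun δ ε => logInfProb E P T (c⁻¹ • q) δ ε (c⁻¹ • O),
    EReal.biInf_coe_mul_inv_smul hc, ← mul_neg]
  exact mul_le_mul_of_nonneg_left key (EReal.coe_nonneg.2 hc.le)

lemma LDPUpperCompact.rescale {E : Set (Sp d)} {P : Sp d → Measure (Path d)} {T : ℝ}
    {I : Sp d → Sp d → ℝ} (h : LDPUpperCompact E P T fun q q' => (I q q' : EReal)) {c : ℝ}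
    (hc : 0 < c) :
    LDPUpperCompact E P (c * T) fun q q' => (rescaledRate I c q q' : EReal) := by
  intro q V hV
  have key := h (c⁻¹ • q) (c⁻¹ • V) (hV.smul _)
  change ⨅ δ : {δ : ℝ // 0 < δ}, limsup (fun ε => logSupProb E P (c * T) q δ ε V) (𝓝[>] 0) ≤
    -(⨅ q' ∈ V, ((c * I (c⁻¹ • q) (c⁻¹ • q') : ℝ) : EReal))
  simp only [logSupProb_mul_time E P hc,
    EReal.iInf_limsup_rescale hc fun δ ε => logSupProb E P T (c⁻¹ • q) δ ε (c⁻¹ • V),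
    EReal.biInf_coe_mul_inv_smul hc, ← mul_neg]
  exact mul_le_mul_of_nonneg_left key (EReal.coe_nonneg.2 hc.le)

lemma WeakLDP.rescale {E : Set (Sp d)} {P : Sp d → Measure (Path d)} {T : ℝ}
    {I : Sp d → Sp d → ℝ} (h : WeakLDP E P T I) {c : ℝ} (hc : 0 < c) :
    WeakLDP E P (c * T) (rescaledRate I c) := by
  obtain ⟨hlsc, hnonneg, hlower, hupper⟩ := h
  have hsmul : Continuous fun p : Sp d × Sp d => (c⁻¹ • p.1, c⁻¹ • p.2) := by fun_prop
  refine ⟨(continuous_const_mul c).comp_lowerSemicontinuous (hlsc.comp hsmul)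
      (monotone_mul_left_of_nonneg hc.le), fun q q' => mul_nonneg hc.le (hnonneg _ _),
    hlower.rescale hc, hupper.rescale hc⟩

/-- If `Z^ε(T₀)` satisfies the weak LDP with rate function `I₀` for
some `T₀ > 0`, then `Z^ε(T)` satisfies the weak LDP for every `T > 0`, with rate
functions obeying `I_{θT}(θq,θq') = θ I_T(q,q')`. -/
theorem weakLDP_all_T_and_scaling
    {d : ℕ} (M : MarkovSetup d) (T₀ : ℝ) (hT₀ : 0 < T₀) (I₀ : Sp d → Sp d → ℝ)
    (h : WeakLDP M.E M.P T₀ I₀) :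
    ∃ I : ℝ → Sp d → Sp d → ℝ, I T₀ = I₀ ∧
      (∀ T : ℝ, 0 < T → WeakLDP M.E M.P T (I T)) ∧
      ∀ θ T : ℝ, 0 < θ → 0 < T → ∀ q q' : Sp d,
        I (θ * T) (θ • q) (θ • q') = θ * I T q q' := by
  refine ⟨fun T => rescaledRate I₀ (T / T₀), by simp only [div_self hT₀.ne', rescaledRate_one],
    fun T hT => ?_, fun θ T hθ _ q q' => ?_⟩
  · simpa only [div_mul_cancel₀ T hT₀.ne'] using h.rescale (div_pos hT hT₀)
  · simpa only [mul_div_assoc] using rescaledRate_mul I₀ hθ.ne' (T / T₀) q q'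

end GreenLDP
end
end

section
/- If the family Z^ε(T) = ε Z(T/ε) satisfies the weak large deviation principle in ℝ^d with rate functions I_T for every T > 0, then the rate functions are subadditive along the Markov property: I_{T+T'}(q,q'') ≤ I_T(q,q') + I_{T'}(q',q'') for all T > 0, T' > 0 and q,q',q'' ∈ ℝ^d. -/
open MeasureTheory Filter Set Metric
open scoped ENNReal Topology Pointwise

noncomputable section

namespace GreenLDP

variable {d : ℕ}

/- Reaching a neighbourhood of `q'` by time `T` and then, restarting there by the
Markov property, a neighbourhood of `q''` within time `T'` has probability at least
`exp(-(I_T(q,q') + I_{T'}(q',q''))/ε)` up to an arbitrarily small error in the exponent. The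
weak LDP upper bound at time `T + T'` on a small closed ball around `q''`, together with the
lower semicontinuity of `I_{T+T'}`, then forbids `I_{T+T'}(q,q'')` to exceed that sum. -/

lemma coe_lt_mul_log_iff {ε : ℝ} (hε : 0 < ε) (b : ℝ) (x : ℝ≥0∞) :
    (b : EReal) < ε * ENNReal.log x ↔ EReal.exp ((b / ε : ℝ)) < x := by
  rw [EReal.coe_div, mul_comm, ← EReal.div_lt_iff (EReal.coe_pos.mpr hε) (EReal.coe_ne_top ε),
    ← EReal.exp_lt_exp_iff, ENNReal.exp_log]

lemma mul_log_lt_coe_iff {ε : ℝ} (hε : 0 < ε) (b : ℝ) (x : ℝ≥0∞) :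
    (ε : EReal) * ENNReal.log x < b ↔ x < EReal.exp ((b / ε : ℝ)) := by
  rw [EReal.coe_div, mul_comm, ← EReal.lt_div_iff (EReal.coe_pos.mpr hε) (EReal.coe_ne_top ε),
    ← EReal.exp_lt_exp_iff, ENNReal.exp_log]

lemma LowerSemicontinuous.exists_closedBall_lt {X Y β : Type*} [TopologicalSpace X]
    [PseudoMetricSpace Y] [Preorder β] {f : X × Y → β} (hf : LowerSemicontinuous f) (x : X)
    {y : Y} {c : β} (hc : c < f (x, y)) : ∃ r > 0, ∀ v ∈ closedBall y r, c < f (x, v) :=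
  nhds_basis_closedBall.eventually_iff.mp <|
    ((Continuous.prodMk_right x).tendsto y).eventually (hf (x, y) c hc)

lemma nearScaled_mono {E : Set (Sp d)} {ε : ℝ} {q : Sp d} {δ δ' : ℝ} (h : δ ≤ δ') :
    nearScaled E ε q δ ⊆ nearScaled E ε q δ' :=
  fun _ hz => ⟨hz.1, hz.2.trans_le h⟩

lemma nearScaled_eq_inter_preimage (E : Set (Sp d)) (ε : ℝ) (q : Sp d) (δ : ℝ) :
    nearScaled E ε q δ = E ∩ (ε • ·) ⁻¹' ball q δ := by
  ext w
  simp [nearScaled, dist_eq_norm]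

lemma LDPLower.exists_eventually_exp_lt {E : Set (Sp d)} {P : Sp d → Measure (Path d)} {T : ℝ}
    {J : Sp d → Sp d → ℝ} (hL : LDPLower E P T fun a b => (J a b : EReal))
    {q q₀ : Sp d} {O : Set (Sp d)} (hO : IsOpen O) (hq₀ : q₀ ∈ O) {b : ℝ} (hb : b < -J q q₀) :
    ∃ δ > 0, ∀ᶠ ε in 𝓝[>] (0 : ℝ),
      EReal.exp ((b / ε : ℝ)) < ⨅ z ∈ nearScaled E ε q δ, P z {ω | scaledPath ε ω T ∈ O} := by
  have hlt : (b : EReal) < ⨆ δ : {δ : ℝ // 0 < δ}, liminf (fun ε : ℝ => (ε : EReal) *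
      ENNReal.log (⨅ z ∈ nearScaled E ε q δ.1, P z {ω | scaledPath ε ω T ∈ O})) (𝓝[>] 0) :=
    calc (b : EReal) < -(J q q₀ : EReal) := by exact_mod_cast hb
      _ ≤ -⨅ q' ∈ O, (J q q' : EReal) := EReal.neg_le_neg_iff.mpr (iInf₂_le q₀ hq₀)
      _ ≤ _ := hL q O hO
  obtain ⟨δ, hδ⟩ := lt_iSup_iff.mp hlt
  refine ⟨δ.1, δ.2, ?_⟩
  filter_upwards [eventually_lt_of_lt_liminf hδ, self_mem_nhdsWithin] with ε hε hεpos
  exact (coe_lt_mul_log_iff hεpos b _).mp hε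

lemma LDPUpperCompact.exists_eventually_lt_exp {E : Set (Sp d)} {P : Sp d → Measure (Path d)}
    {T : ℝ} {J : Sp d → Sp d → ℝ} (hU : LDPUpperCompact E P T fun a b => (J a b : EReal))
    (q : Sp d) {V : Set (Sp d)} (hV : IsCompact V) {c : ℝ} (hc : ∀ v ∈ V, c ≤ J q v) {b : ℝ}
    (hb : -c < b) :
    ∃ δ > 0, ∀ᶠ ε in 𝓝[>] (0 : ℝ),
      ⨆ z ∈ nearScaled E ε q δ, P z {ω | scaledPath ε ω T ∈ V} < EReal.exp ((b / ε : ℝ)) := by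
  have hlt : ⨅ δ : {δ : ℝ // 0 < δ}, limsup (fun ε : ℝ => (ε : EReal) *
      ENNReal.log (⨆ z ∈ nearScaled E ε q δ.1, P z {ω | scaledPath ε ω T ∈ V})) (𝓝[>] 0) <
      b :=
    calc _ ≤ -⨅ v ∈ V, (J q v : EReal) := hU q V hV
      _ ≤ -(c : EReal) :=
        EReal.neg_le_neg_iff.mpr (le_iInf₂ fun v hv => by exact_mod_cast hc v hv)
      _ < b := by exact_mod_cast hb
  obtain ⟨δ, hδ⟩ := iInf_lt_iff.mp hlt
  refine ⟨δ.1, δ.2, ?_⟩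
  filter_upwards [eventually_lt_of_limsup_lt hδ, self_mem_nhdsWithin] with ε hε hεpos
  exact (mul_log_lt_coe_iff hεpos b _).mp hε

namespace MarkovSetup

variable (M : MarkovSetup d)

lemma nonempty_E : M.E.Nonempty :=
  nonempty_iff_ne_empty.mpr fun hE => M.unbounded (hE ▸ Bornology.isBounded_empty)

lemma iInf_mul_le_measure_shift {z : Sp d} (hz : z ∈ M.E) {s : ℝ} (hs : 0 ≤ s)
    {A : Set (Sp d)} (hA : MeasurableSet A) {G : Set (Path d)} (hG : MeasurableSet G) :
    (⨅ z' ∈ M.E ∩ A, M.P z' G) * M.P z {ω | ω s ∈ A} ≤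
      M.P z {ω | (fun t => ω (s + t)) ∈ G} := by
  set m := ⨅ z' ∈ M.E ∩ A, M.P z' G
  have hshift : Measurable fun (ω : Path d) (t : ℝ) => ω (s + t) :=
    measurable_pi_lambda _ fun t => measurable_pi_apply (s + t)
  have hbound : ∀ᵐ ω ∂M.P z, {ω : Path d | ω s ∈ A}.indicator (fun _ => m) ω ≤ M.P (ω s) G := by
    filter_upwards [M.stays z hz] with ω hω
    by_cases hωA : ω s ∈ A
    · simpa [hωA] using iInf₂_le (ω s) ⟨hω s hs, hωA⟩
    · simp [hωA]
  calc m * M.P z {ω | ω s ∈ A}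
      = ∫⁻ ω, {ω : Path d | ω s ∈ A}.indicator (fun _ => m) ω ∂M.P z :=
        (lintegral_indicator_const (measurable_pi_apply s hA) m).symm
    _ ≤ ∫⁻ ω, ∫⁻ ω', G.indicator 1 ω' ∂M.P (ω s) ∂M.P z := by
        simpa only [lintegral_indicator_one hG] using lintegral_mono_ae hbound
    _ = ∫⁻ ω, G.indicator 1 (fun t => ω (s + t)) ∂M.P z :=
        (M.markov z hz s hs _ (measurable_one.indicator hG)).symm
    _ = M.P z {ω | (fun t => ω (s + t)) ∈ G} := lintegral_indicator_one (hshift hG)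

lemma eventually_exp_lt_of_chain {T T' : ℝ} (hT : 0 ≤ T) {q q' : Sp d} {δ₁ δ₂ : ℝ}
    {O : Set (Sp d)} (hO : MeasurableSet O) {b₁ b₂ : ℝ}
    (h₁ : ∀ᶠ ε in 𝓝[>] (0 : ℝ), EReal.exp ((b₁ / ε : ℝ)) <
      ⨅ z ∈ nearScaled M.E ε q δ₁, M.P z {ω | scaledPath ε ω T ∈ ball q' δ₂})
    (h₂ : ∀ᶠ ε in 𝓝[>] (0 : ℝ), EReal.exp ((b₂ / ε : ℝ)) <
      ⨅ z ∈ nearScaled M.E ε q' δ₂, M.P z {ω | scaledPath ε ω T' ∈ O}) :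
    ∀ᶠ ε in 𝓝[>] (0 : ℝ), ∀ z ∈ nearScaled M.E ε q δ₁,
      EReal.exp (((b₁ + b₂) / ε : ℝ)) < M.P z {ω | scaledPath ε ω (T + T') ∈ O} := by
  filter_upwards [h₁, h₂, self_mem_nhdsWithin] with ε h₁ h₂ (hε : 0 < ε) z hz
  have hsmul : Measurable fun w : Sp d => ε • w := measurable_const_smul ε
  have hchain := M.iInf_mul_le_measure_shift hz.1 (div_nonneg hT hε.le)
    (hsmul (measurableSet_ball (x := q') (ε := δ₂))) (G := {ω | ε • ω (T' / ε) ∈ O})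
    (hsmul.comp (measurable_pi_apply (T' / ε)) hO)
  rw [← nearScaled_eq_inter_preimage] at hchain
  calc EReal.exp (((b₁ + b₂) / ε : ℝ))
      = EReal.exp ((b₂ / ε : ℝ)) * EReal.exp ((b₁ / ε : ℝ)) := by
        rw [← EReal.exp_add, ← EReal.coe_add, add_div, add_comm]
    _ < (⨅ z' ∈ nearScaled M.E ε q' δ₂, M.P z' {ω | scaledPath ε ω T' ∈ O}) *
          M.P z {ω | scaledPath ε ω T ∈ ball q' δ₂} :=
        ENNReal.mul_lt_mul h₂ (h₁.trans_le (iInf₂_le z hz))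
    _ ≤ M.P z {ω | scaledPath ε ω (T + T') ∈ O} := by
        simp only [scaledPath, add_div]
        exact hchain

/- The LDP lower bounds are vacuous when `nearScaled` is empty (an empty infimum is `⊤`), so a
starting point has to be produced separately. -/
lemma eventually_nearScaled_nonempty {T : ℝ} (hT : 0 ≤ T) {J : Sp d → Sp d → ℝ}
    (hL : LDPLower M.E M.P T fun a b => (J a b : EReal)) (q : Sp d) {ρ : ℝ} (hρ : 0 < ρ) :
    ∀ᶠ ε in 𝓝[>] (0 : ℝ), (nearScaled M.E ε q ρ).Nonempty := by
  obtain ⟨z₀, hz₀⟩ := M.nonempty_E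
  obtain ⟨δ, hδ, hreach⟩ := hL.exists_eventually_exp_lt (q := 0) isOpen_ball (mem_ball_self hρ)
    (b := -J 0 q - 1) (by linarith)
  have hz₀_near : ∀ᶠ ε in 𝓝[>] (0 : ℝ), ε • z₀ ∈ ball 0 δ :=
    (((continuous_id.smul continuous_const).tendsto' 0 0 (zero_smul ℝ z₀)).mono_left
      nhdsWithin_le_nhds).eventually (ball_mem_nhds 0 hδ)
  filter_upwards [hreach, hz₀_near, self_mem_nhdsWithin] with ε hreach hz₀_near (hε : 0 < ε)
  have hpos : M.P z₀ {ω | scaledPath ε ω T ∈ ball q ρ} ≠ 0 :=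
    (hreach.trans_le (iInf₂_le z₀ (by
      rw [nearScaled_eq_inter_preimage]; exact ⟨hz₀, hz₀_near⟩))).ne_bot
  obtain ⟨ω, hωq, hωE⟩ :=
    Measure.exists_mem_of_measure_ne_zero_of_ae hpos (ae_restrict_of_ae (M.stays z₀ hz₀))
  refine ⟨ω (T / ε), ?_⟩
  rw [nearScaled_eq_inter_preimage]
  exact ⟨hωE _ (div_nonneg hT hε.le), hωq⟩

end MarkovSetup

/-- If `Z^ε(T)` satisfies the weak LDP with rate functions `I_T`
for every `T > 0`, then `I_{T+T'}(q,q'') ≤ I_T(q,q') + I_{T'}(q',q'')`. -/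
theorem rate_subadditive
    {d : ℕ} (M : MarkovSetup d) (I : ℝ → Sp d → Sp d → ℝ)
    (h : ∀ T : ℝ, 0 < T → WeakLDP M.E M.P T (I T)) :
    ∀ T T' : ℝ, 0 < T → 0 < T' → ∀ q q' q'' : Sp d,
      I (T + T') q q'' ≤ I T q q' + I T' q' q'' := by
  intro T T' hT hT' q q' q''
  by_contra! hlt
  set S := I T q q' + I T' q' q'' with hS
  obtain ⟨η, hη, hgap⟩ : ∃ η > 0, S + 3 * η = I (T + T') q q'' :=
    ⟨(I (T + T') q q'' - S) / 3, by linarith, by ring⟩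
  obtain ⟨hlsc, -, -, hU⟩ := h (T + T') (add_pos hT hT')
  obtain ⟨r, hr, hball⟩ :=
    LowerSemicontinuous.exists_closedBall_lt hlsc q (c := S + 2 * η) (by simp only; linarith)
  obtain ⟨δ₂, hδ₂, hsecond⟩ := (h T' hT').2.2.1.exists_eventually_exp_lt (q := q') (q₀ := q'')
    isOpen_ball (mem_ball_self hr) (b := -I T' q' q'' - η / 2) (by linarith)
  obtain ⟨δ₁, hδ₁, hfirst⟩ := (h T hT).2.2.1.exists_eventually_exp_lt (q := q) (q₀ := q')
    isOpen_ball (mem_ball_self hδ₂) (b := -I T q q' - η / 2) (by linarith)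
  obtain ⟨δ, hδ, hthird⟩ := hU.exists_eventually_lt_exp q (isCompact_closedBall q'' r)
    (fun v hv => (hball v hv).le) (b := -S - η) (by linarith)
  obtain ⟨ε, hchain, hcap, z, hz⟩ := ((M.eventually_exp_lt_of_chain hT.le measurableSet_ball
    hfirst hsecond).and (hthird.and (M.eventually_nearScaled_nonempty hT.le (h T hT).2.2.1 q
      (lt_min hδ hδ₁)))).exists
  refine (hcap.trans_le' ?_).false
  calc EReal.exp ((-S - η) / ε : ℝ)
      = EReal.exp ((-I T q q' - η / 2 + (-I T' q' q'' - η / 2)) / ε : ℝ) := by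
        rw [hS]; congr 3; ring
    _ ≤ M.P z {ω | scaledPath ε ω (T + T') ∈ ball q'' r} :=
        (hchain z (nearScaled_mono (min_le_right _ _) hz)).le
    _ ≤ M.P z {ω | scaledPath ε ω (T + T') ∈ closedBall q'' r} :=
        measure_mono fun ω hω => ball_subset_closedBall hω
    _ ≤ _ := le_iSup₂ (f := fun z _ => M.P z {ω | scaledPath ε ω (T + T') ∈ closedBall q'' r})
        z (nearScaled_mono (min_le_left _ _) hz)

end GreenLDP
end
end

section
/- Under condition (H2), for any q ≠ q' in ℝ^d and any A > 0 there exists κ > 0 such that lim_{δ→0} limsup_{n→∞} sup_{z ∈ E : |z − nq| < δn} (1/n) log ∫_0^{κn} ℙ_z(Z(t) ∈ nB(q',δ)) dt ≤ −A, where B(q',δ) denotes the open ball of radius δ centered at q'. -/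
open MeasureTheory Filter Set Metric
open scoped ENNReal Topology Pointwise

noncomputable section

namespace GreenLDP

variable {d : ℕ}

/-! A Chernoff bound in a direction `a` along `q' - q` reduces the claim to exponential moments:
`ℙ_z(Z(t) ∈ nB(q',δ)) ≤ e^{-n(A + 1/2)} 𝔼_z e^{⟨a, Z(t) - z⟩}` for `z` near `nq` and `δ` small.
Splitting `[0, t]` into unit steps, the Markov property and (H2) give
`𝔼_z e^{⟨a, Z(t) - z⟩} ≤ φ̂(a)^⌈t⌉`, so over times `t ≤ κn` the moment costs only
`e^{κ n log φ̂(a)}`, which is negligible against `e^{-n/2}` once `κ` is small. -/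

section ExpInner

variable {F : Type*} [NormedAddCommGroup F] [InnerProductSpace ℝ F]

def expInner (a x : F) : ℝ≥0∞ := ENNReal.ofReal (Real.exp (inner ℝ a x))

theorem expInner_add (a x y : F) : expInner a (x + y) = expInner a x * expInner a y := by
  rw [expInner, inner_add_right, Real.exp_add, ENNReal.ofReal_mul (Real.exp_nonneg _)]
  rfl

theorem expInner_zero (a : F) : expInner a 0 = 1 := by
  simp [expInner]

theorem expInner_neg_mul_self (a x : F) : expInner a (-x) * expInner a x = 1 := by
  rw [← expInner_add, neg_add_cancel, expInner_zero]

theorem expInner_ne_top (a x : F) : expInner a x ≠ ⊤ := ENNReal.ofReal_ne_top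

theorem continuous_expInner (a : F) : Continuous (expInner a) :=
  ENNReal.continuous_ofReal.comp (Real.continuous_exp.comp (continuous_const.inner continuous_id))

theorem measure_le_inner_le_ofReal_exp_mul_lintegral [MeasurableSpace F] [OpensMeasurableSpace F]
    {Ω : Type*} [MeasurableSpace Ω] (μ : Measure Ω) {X : Ω → F} (hX : Measurable X) (a : F)
    (c : ℝ) :
    μ {ω | c ≤ inner ℝ a (X ω)} ≤ ENNReal.ofReal (Real.exp (-c)) * ∫⁻ ω, expInner a (X ω) ∂μ := by
  have hsub : {ω | c ≤ inner ℝ a (X ω)} ⊆ {ω | ENNReal.ofReal (Real.exp c) ≤ expInner a (X ω)} :=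
    fun ω hω => ENNReal.ofReal_le_ofReal (Real.exp_le_exp.mpr hω)
  calc μ {ω | c ≤ inner ℝ a (X ω)}
      ≤ (∫⁻ ω, expInner a (X ω) ∂μ) / ENNReal.ofReal (Real.exp c) :=
        (measure_mono hsub).trans <| meas_ge_le_lintegral_div
          ((continuous_expInner a).measurable.comp hX).aemeasurable
          (ENNReal.ofReal_pos.mpr (Real.exp_pos c)).ne' ENNReal.ofReal_ne_top
    _ = ENNReal.ofReal (Real.exp (-c)) * ∫⁻ ω, expInner a (X ω) ∂μ := by
        rw [div_eq_mul_inv, mul_comm, ← ENNReal.ofReal_inv_of_pos (Real.exp_pos c), Real.exp_neg]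

theorem le_inner_sub (a q q' x z : F) (n : ℝ) :
    n * inner ℝ a (q' - q) - ‖a‖ * (‖x - n • q'‖ + ‖z - n • q‖) ≤ inner ℝ a (x - z) := by
  have hsplit : x - z = n • (q' - q) + (x - n • q') - (z - n • q) := by module
  have h₁ := abs_le.mp (abs_real_inner_le_norm a (x - n • q'))
  have h₂ := abs_le.mp (abs_real_inner_le_norm a (z - n • q))
  rw [hsplit, inner_sub_right a (n • (q' - q) + (x - n • q')), inner_add_right,
    real_inner_smul_right]
  linarith [h₁.1, h₂.2]

theorem norm_sub_smul_lt_of_mem_smul_ball {n δ : ℝ} (hn : 0 < n) {q x : F}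
    (hx : x ∈ n • ball q δ) : ‖x - n • q‖ < δ * n := by
  obtain ⟨y, hy, rfl⟩ := mem_smul_set.mp hx
  rw [← smul_sub, norm_smul, Real.norm_of_nonneg hn.le, mul_comm]
  exact mul_lt_mul_of_pos_right (mem_ball_iff_norm.mp hy) hn

theorem exists_mul_le_inner_sub_of_ne {q q' : F} (h : q ≠ q') (b : ℝ) :
    ∃ a : F, ∃ δ > 0, ∀ n : ℝ, 0 < n → ∀ x ∈ n • ball q' δ, ∀ z : F, ‖z - n • q‖ < δ * n →
      n * b ≤ inner ℝ a (x - z) := by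
  set r := ‖q' - q‖ with hr_def
  have hr : 0 < r := norm_pos_iff.mpr (sub_ne_zero.mpr h.symm)
  set s := |b| + 1
  have hs : 0 < s := by positivity
  refine ⟨(s / r ^ 2) • (q' - q), r / (4 * s), by positivity, fun n hn x hx z hz => ?_⟩
  have hinner : inner ℝ ((s / r ^ 2) • (q' - q)) (q' - q) = s := by
    rw [real_inner_smul_left, real_inner_self_eq_norm_sq, ← hr_def]
    field_simp
  have hnorm : ‖(s / r ^ 2) • (q' - q)‖ * (r / (4 * s)) = 1 / 4 := by
    rw [norm_smul, Real.norm_of_nonneg (by positivity), ← hr_def]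
    field_simp
  have hx' := norm_sub_smul_lt_of_mem_smul_ball hn hx
  have key := le_inner_sub ((s / r ^ 2) • (q' - q)) q q' x z n
  rw [hinner] at key
  nlinarith [le_abs_self b, norm_nonneg ((s / r ^ 2) • (q' - q))]

end ExpInner

theorem limsup_inv_mul_log_le_of_le_ofReal_exp {x : ℕ → ℝ≥0∞} {C A : ℝ}
    (h : ∀ᶠ n : ℕ in atTop, x n ≤ ENNReal.ofReal (Real.exp (C - A * n))) :
    limsup (fun n : ℕ => (((n : ℝ)⁻¹ : ℝ) : EReal) * ENNReal.log (x n)) atTop ≤ -(A : EReal) := by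
  have hbound : ∀ᶠ n : ℕ in atTop,
      (((n : ℝ)⁻¹ : ℝ) : EReal) * ENNReal.log (x n) ≤ ((C / n - A : ℝ) : EReal) := by
    filter_upwards [h, eventually_gt_atTop 0] with n hx hn
    have hn' : (0 : ℝ) < n := by exact_mod_cast hn
    calc (((n : ℝ)⁻¹ : ℝ) : EReal) * ENNReal.log (x n)
        ≤ (((n : ℝ)⁻¹ : ℝ) : EReal) * ((C - A * n : ℝ) : EReal) := by
          refine mul_le_mul_of_nonneg_left ?_ (by exact_mod_cast (inv_pos.mpr hn').le)
          simpa [ENNReal.log_ofReal_of_pos (Real.exp_pos _)] using ENNReal.log_monotone hx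
      _ = ((C / n - A : ℝ) : EReal) := by
          rw [← EReal.coe_mul]
          congr 1
          field_simp
  have hlim : Tendsto (fun n : ℕ => ((C / n - A : ℝ) : EReal)) atTop (𝓝 (-(A : EReal))) := by
    rw [← EReal.coe_neg]
    exact EReal.tendsto_coe.mpr <| by
      simpa using (tendsto_const_div_atTop_nhds_zero_nat C).sub_const A
  exact (limsup_le_limsup hbound).trans_eq hlim.limsup_eq

theorem measurable_expInner_eval (a : Sp d) (t : ℝ) :
    Measurable fun ω : Path d => expInner a (ω t) :=
  (continuous_expInner a).measurable.comp (measurable_pi_apply t)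

namespace MarkovSetup

variable (M : MarkovSetup d) (a : Sp d)

theorem ae_eq_start {z : Sp d} (hz : z ∈ M.E) : ∀ᵐ ω ∂M.P z, ω 0 = z := by
  have := M.prob z
  rw [ae_iff_measure_eq
    (measurableSet_eq_fun (measurable_pi_apply 0) measurable_const).nullMeasurableSet, measure_univ]
  exact M.start z hz

theorem one_le_mgf : 1 ≤ mgf M.E M.P a := by
  obtain ⟨z, hz⟩ := Bornology.nonempty_of_not_isBounded M.unbounded
  have := M.prob z
  have hstart : ∫⁻ ω, expInner a (ω 0 - z) ∂M.P z = 1 := by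
    rw [lintegral_congr_ae <|
      (M.ae_eq_start hz).mono fun ω hω => by rw [hω, sub_self, expInner_zero]]
    simp
  exact hstart ▸ le_iSup₂_of_le z hz (le_iSup₂_of_le 0 ⟨le_rfl, zero_le_one⟩ le_rfl)

theorem exists_mgf_eq_ofReal_exp (h : mgf M.E M.P a ≠ ⊤) :
    ∃ C : ℝ, 0 ≤ C ∧ mgf M.E M.P a = ENNReal.ofReal (Real.exp C) := by
  have h₁ : 1 ≤ (mgf M.E M.P a).toReal := by
    simpa using ENNReal.toReal_mono h (M.one_le_mgf a)
  refine ⟨Real.log (mgf M.E M.P a).toReal, Real.log_nonneg h₁, ?_⟩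
  rw [Real.exp_log (by linarith), ENNReal.ofReal_toReal h]

theorem lintegral_expInner_le_mul_mgf {z : Sp d} (hz : z ∈ M.E) {t : ℝ} (ht : t ∈ Icc (0 : ℝ) 1) :
    ∫⁻ ω, expInner a (ω t) ∂M.P z ≤ expInner a z * mgf M.E M.P a := by
  calc ∫⁻ ω, expInner a (ω t) ∂M.P z = expInner a z * ∫⁻ ω, expInner a (ω t - z) ∂M.P z := by
        rw [← lintegral_const_mul' _ _ (expInner_ne_top a z)]
        simp_rw [← expInner_add, add_sub_cancel]
    _ ≤ expInner a z * mgf M.E M.P a := by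
        gcongr
        exact le_iSup₂_of_le z hz (le_iSup₂_of_le t ht le_rfl)

theorem lintegral_expInner_add_le {z : Sp d} (hz : z ∈ M.E) {s r : ℝ} (hs : 0 ≤ s)
    (hr : r ∈ Icc (0 : ℝ) 1) :
    ∫⁻ ω, expInner a (ω (s + r)) ∂M.P z ≤ mgf M.E M.P a * ∫⁻ ω, expInner a (ω s) ∂M.P z := by
  calc ∫⁻ ω, expInner a (ω (s + r)) ∂M.P z
      = ∫⁻ ω, ∫⁻ ω', expInner a (ω' r) ∂M.P (ω s) ∂M.P z :=
        M.markov z hz s hs (fun ω' => expInner a (ω' r))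
          (measurable_expInner_eval a r)
    _ ≤ ∫⁻ ω, expInner a (ω s) * mgf M.E M.P a ∂M.P z :=
        lintegral_mono_ae <| (M.stays z hz).mono fun ω hω =>
          M.lintegral_expInner_le_mul_mgf a (hω s hs) hr
    _ = mgf M.E M.P a * ∫⁻ ω, expInner a (ω s) ∂M.P z := by
        rw [lintegral_mul_const _ (measurable_expInner_eval a s), mul_comm]

theorem lintegral_expInner_le_pow {z : Sp d} (hz : z ∈ M.E) (k : ℕ) {t : ℝ} (ht₀ : 0 ≤ t)
    (htk : t ≤ k) : ∫⁻ ω, expInner a (ω t) ∂M.P z ≤ expInner a z * mgf M.E M.P a ^ k := by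
  induction k generalizing t with
  | zero =>
    have := M.prob z
    obtain rfl : t = 0 := le_antisymm (by exact_mod_cast htk) ht₀
    rw [lintegral_congr_ae ((M.ae_eq_start hz).mono fun ω hω => by rw [hω])]
    simp
  | succ k ih =>
    rcases le_or_gt t k with htk' | hkt
    · exact (ih ht₀ htk').trans <|
        mul_le_mul_right (pow_le_pow_right₀ (M.one_le_mgf a) k.le_succ) _
    · have hr : t - k ∈ Icc (0 : ℝ) 1 := ⟨by linarith, by push_cast at htk; linarith⟩
      calc ∫⁻ ω, expInner a (ω t) ∂M.P z
          = ∫⁻ ω, expInner a (ω (k + (t - k))) ∂M.P z := by rw [add_sub_cancel]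
        _ ≤ mgf M.E M.P a * ∫⁻ ω, expInner a (ω k) ∂M.P z :=
            M.lintegral_expInner_add_le a hz k.cast_nonneg hr
        _ ≤ mgf M.E M.P a * (expInner a z * mgf M.E M.P a ^ k) := by
            gcongr
            exact ih k.cast_nonneg le_rfl
        _ = expInner a z * mgf M.E M.P a ^ (k + 1) := by ring

theorem lintegral_expInner_sub_le_pow {z : Sp d} (hz : z ∈ M.E) (k : ℕ) {t : ℝ} (ht₀ : 0 ≤ t)
    (htk : t ≤ k) : ∫⁻ ω, expInner a (ω t - z) ∂M.P z ≤ mgf M.E M.P a ^ k := by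
  calc ∫⁻ ω, expInner a (ω t - z) ∂M.P z = expInner a (-z) * ∫⁻ ω, expInner a (ω t) ∂M.P z := by
        rw [← lintegral_const_mul' _ _ (expInner_ne_top a (-z))]
        simp_rw [sub_eq_neg_add, expInner_add]
    _ ≤ expInner a (-z) * (expInner a z * mgf M.E M.P a ^ k) := by
        gcongr
        exact M.lintegral_expInner_le_pow a hz k ht₀ htk
    _ = mgf M.E M.P a ^ k := by rw [← mul_assoc, expInner_neg_mul_self, one_mul]

theorem setLIntegral_measure_le {z : Sp d} (hz : z ∈ M.E) {C c T : ℝ} (hC : 0 ≤ C) (hT : 0 ≤ T)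
    (hmgf : mgf M.E M.P a = ENNReal.ofReal (Real.exp C)) {B : Set (Sp d)}
    (hB : ∀ x ∈ B, c ≤ inner ℝ a (x - z)) :
    ∫⁻ t in Ioc (0 : ℝ) T, M.P z {ω | ω t ∈ B} ≤
      ENNReal.ofReal (Real.exp (T + (T + 1) * C - c)) := by
  have hpoint : ∀ t ∈ Ioc (0 : ℝ) T,
      M.P z {ω | ω t ∈ B} ≤ ENNReal.ofReal (Real.exp (-c + (T + 1) * C)) := by
    intro t ht
    calc M.P z {ω | ω t ∈ B}
        ≤ M.P z {ω | c ≤ inner ℝ a (ω t - z)} := measure_mono fun ω hω => hB _ hω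
      _ ≤ ENNReal.ofReal (Real.exp (-c)) * ∫⁻ ω, expInner a (ω t - z) ∂M.P z :=
          measure_le_inner_le_ofReal_exp_mul_lintegral _ (by fun_prop) a c
      _ ≤ ENNReal.ofReal (Real.exp (-c)) * mgf M.E M.P a ^ ⌈T⌉₊ := by
          gcongr
          exact M.lintegral_expInner_sub_le_pow a hz _ ht.1.le (ht.2.trans (Nat.le_ceil T))
      _ = ENNReal.ofReal (Real.exp (-c + ⌈T⌉₊ * C)) := by
          rw [hmgf, ← ENNReal.ofReal_pow (Real.exp_nonneg C), ← Real.exp_nat_mul,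
            ← ENNReal.ofReal_mul (Real.exp_nonneg _), ← Real.exp_add]
      _ ≤ ENNReal.ofReal (Real.exp (-c + (T + 1) * C)) := by
          gcongr
          exact (Nat.ceil_lt_add_one hT).le
  calc ∫⁻ t in Ioc (0 : ℝ) T, M.P z {ω | ω t ∈ B}
      ≤ ∫⁻ _ in Ioc (0 : ℝ) T, ENNReal.ofReal (Real.exp (-c + (T + 1) * C)) :=
        setLIntegral_mono measurable_const hpoint
    _ = ENNReal.ofReal (Real.exp (-c + (T + 1) * C)) * ENNReal.ofReal T := by
        rw [setLIntegral_const, Real.volume_Ioc, sub_zero]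
    _ ≤ ENNReal.ofReal (Real.exp (-c + (T + 1) * C)) * ENNReal.ofReal (Real.exp T) := by
        gcongr
        linarith [Real.add_one_le_exp T]
    _ = ENNReal.ofReal (Real.exp (T + (T + 1) * C - c)) := by
        rw [← ENNReal.ofReal_mul (Real.exp_nonneg _), ← Real.exp_add]
        ring_nf

end MarkovSetup

/-- Under (H2), for any `q ≠ q'` and any `A > 0` there is `κ > 0`
such that `lim_{δ→0} limsup_{n→∞} sup_{z∈E,|z−nq|<δn} (1/n) log
∫₀^{κn} ℙ_z(Z(t) ∈ nB(q',δ)) dt ≤ −A`. -/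
theorem short_time_negligible
    {d : ℕ} (M : MarkovSetup d) (hH2 : H2 M.E M.P) :
    ∀ q q' : Sp d, q ≠ q' → ∀ A : ℝ, 0 < A → ∃ κ : ℝ, 0 < κ ∧
      (⨅ δ : {δ : ℝ // 0 < δ},
        limsup (fun n : ℕ =>
          ((((n : ℝ)⁻¹ : ℝ)) : EReal) * ENNReal.log
            (⨆ z ∈ nearE M.E q n δ.1,
              ∫⁻ t in Ioc (0 : ℝ) (κ * n),
                M.P z {ω | ω t ∈ (n : ℝ) • ball q' δ.1})) atTop)
        ≤ -(A : EReal) := by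
  intro q q' hqq A _
  obtain ⟨a, δ, hδ, hsep⟩ := exists_mul_le_inner_sub_of_ne hqq (A + 1 / 2)
  obtain ⟨C, hC, hmgf⟩ := M.exists_mgf_eq_ofReal_exp a (hH2 a).ne
  -- With `κ = (2 (1 + C))⁻¹` the time cost `κ n (1 + C)` is exactly the margin `n / 2`.
  refine ⟨(2 * (1 + C))⁻¹, by positivity, (iInf_le _ ⟨δ, hδ⟩).trans ?_⟩
  refine limsup_inv_mul_log_le_of_le_ofReal_exp (C := C) ?_
  filter_upwards [eventually_gt_atTop 0] with n hn
  have hn' : (0 : ℝ) < n := by exact_mod_cast hn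
  refine iSup₂_le fun z hz => (M.setLIntegral_measure_le a hz.1 hC (by positivity) hmgf
    fun x hx => hsep n hn' x hx z hz.2).trans_eq ?_
  congr 2
  field_simp
  ring

end GreenLDP
end
end
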